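/- arXiv:1912.09552 — 5 statements merged into one kernel-verified Lean document; each statement's English description precedes it below -/
import Mathlib

section
/- Suppose y* minimizes ρ over K_1 × ⋯ × K_N. Then for every n = 1,…,N: if ρ(y*) < z_n then g_n(y*_n) ≤ g_n(u) for all u ∈ K_n (i.e., g_n(y*_n) is the minimum value of g_n); if ρ(y*) > z_n then g_n(y*_n) ≥ g_n(u) for all u ∈ K_n (i.e., g_n(y*_n) is the maximum value of g_n); and if ρ(y*) = z_n then every point obtained from y* by replacing its n-th coordinate with an arbitrary element of K_n is also a minimizer of ρ. -/
/-- Behavior of a minimizer of the adversary's objective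
`ρ(y) = (Σ_n z_n g_n(y_n)) / (1 + Σ_n g_n(y_n))` over `K_1 × ⋯ × K_N`. -/
theorem stmt_13
    (N : ℕ) (hN : 1 ≤ N)
    (K : Fin N → Type*) [∀ n, Nonempty (K n)]
    (g : ∀ n : Fin N, K n → ℝ) (hg : ∀ n y, 0 ≤ g n y)
    (z : Fin N → ℝ)
    (ρ : (∀ n, K n) → ℝ)
    (hρ : ∀ y : ∀ n, K n,
      ρ y = (∑ n, z n * g n (y n)) / (1 + ∑ n, g n (y n)))
    (ys : ∀ n, K n) (hys : ∀ y : ∀ n, K n, ρ ys ≤ ρ y) :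
    ∀ n : Fin N,
      (ρ ys < z n → ∀ u : K n, g n (ys n) ≤ g n u) ∧
      (z n < ρ ys → ∀ u : K n, g n u ≤ g n (ys n)) ∧
      (ρ ys = z n → ∀ u : K n, ∀ y : ∀ l, K l,
        ρ (Function.update ys n u) ≤ ρ y) := by
  intro n
  set S : ℝ := ∑ m, g m (ys m) with hS
  set A : ℝ := ∑ m, z m * g m (ys m) with hA
  have hSnn : 0 ≤ S := Finset.sum_nonneg fun m _ => hg m (ys m)
  have hSpos : (0:ℝ) < 1 + S := by linarith
  -- sums for updated point
  have hupdS : ∀ u : K n, (∑ m, g m (Function.update ys n u m))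
      = S + (g n u - g n (ys n)) := by
    intro u
    have h : ∀ m, g m (Function.update ys n u m)
        = g m (ys m) + (if m = n then g n u - g n (ys n) else 0) := by
      intro m
      by_cases h : m = n
      · subst h; simp
      · simp [Function.update_of_ne h, h]
    simp_rw [h, Finset.sum_add_distrib, Finset.sum_ite_eq' Finset.univ n]
    simp [hS]
  have hupdA : ∀ u : K n, (∑ m, z m * g m (Function.update ys n u m))
      = A + z n * (g n u - g n (ys n)) := by
    intro u
    have h : ∀ m, z m * g m (Function.update ys n u m)
        = z m * g m (ys m) + (if m = n then z n * (g n u - g n (ys n)) else 0) := by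
      intro m
      by_cases h : m = n
      · subst h; simp; ring
      · simp [Function.update_of_ne h, h]
    simp_rw [h, Finset.sum_add_distrib, Finset.sum_ite_eq' Finset.univ n]
    simp [hA]
  have hρys : ρ ys = A / (1 + S) := by rw [hρ]
  have hden : ∀ u : K n, (0:ℝ) < 1 + S + (g n u - g n (ys n)) := by
    intro u
    have h1 : 0 ≤ S + (g n u - g n (ys n)) := by
      rw [← hupdS u]
      exact Finset.sum_nonneg fun m _ => hg m _
    linarith
  have key : ∀ u : K n,
      0 ≤ (g n u - g n (ys n)) * (z n * (1 + S) - A) := by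
    intro u
    have h := hys (Function.update ys n u)
    rw [hρys, hρ, hupdS, hupdA] at h
    have hd := hden u
    rw [div_le_div_iff₀ hSpos (by linarith : (0:ℝ) < 1 + (S + (g n u - g n (ys n))))] at h
    nlinarith
  refine ⟨?_, ?_, ?_⟩
  · intro hlt u
    have hz : A < z n * (1 + S) := by
      rw [hρys, div_lt_iff₀ hSpos] at hlt
      linarith
    have := key u
    nlinarith
  · intro hlt u
    have hz : z n * (1 + S) < A := by
      rw [hρys, lt_div_iff₀ hSpos] at hlt
      linarith
    have := key u
    nlinarith
  · intro heq u y
    have hz : A = z n * (1 + S) := by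
      have : A / (1 + S) = z n := by rw [← hρys, heq]
      field_simp at this
      linarith
    have : ρ (Function.update ys n u) = ρ ys := by
      rw [hρ, hupdS, hupdA, hρys, hz]
      rw [div_eq_div_iff (by linarith [hden u] : (0:ℝ) < 1 + (S + (g n u - g n (ys n)))).ne' hSpos.ne']
      ring
    rw [this]
    exact hys y
end

section
/- If t₀ ∈ ℝ satisfies ψ(t₀) ≥ t₀, then ψ(t₀ + ε) > ψ(t₀) for every ε > 0. -/
/-!
`ψ(t) = (B · (A/B) + θ(t) · t) / (B + θ(t))` is a weighted average of the constant `c = A/B` and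
of `t`, i.e. `ψ(t) = c + (t - c) · w(t)` with weight `w = θ / (B + θ) ∈ (0, 1)` nonincreasing.
Hence `ψ(t₀) ≥ t₀` forces `t₀ ≤ c`, and for `t₁ > t₀`
`ψ(t₁) - ψ(t₀) = (t₁ - t₀) · w(t₁) + (c - t₀) · (w(t₀) - w(t₁)) > 0`.
-/

lemma le_of_le_add_sub_mul {c t w : ℝ} (hw : w < 1) (h : t ≤ c + (t - c) * w) : t ≤ c := by
  nlinarith

lemma add_sub_mul_lt_add_sub_mul {c t₀ t₁ : ℝ} {w : ℝ → ℝ} (hw : Antitone w) (hpos : 0 < w t₁)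
    (ht₀ : t₀ ≤ c) (ht : t₀ < t₁) : c + (t₀ - c) * w t₀ < c + (t₁ - c) * w t₁ := by
  nlinarith [mul_pos (sub_pos.2 ht) hpos, mul_nonneg (sub_nonneg.2 ht₀) (sub_nonneg.2 (hw ht.le))]

section Weight

variable {B t : ℝ} {θ : ℝ → ℝ}

lemma div_add_self_lt_one (hB : 0 < B) (hθ : 0 < θ t) : θ t / (B + θ t) < 1 :=
  (div_lt_one (by linarith)).2 (by linarith)

lemma antitone_div_add_self (hB : 0 < B) (hθanti : Antitone θ) (hθpos : ∀ t, 0 < θ t) :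
    Antitone fun t ↦ θ t / (B + θ t) := by
  intro s t hst
  have hs := hθpos s
  have ht := hθpos t
  rw [div_le_div_iff₀ (by linarith) (by linarith)]
  nlinarith [hθanti hst]

lemma div_add_eq_add_sub_mul (hB : 0 < B) (hθ : 0 < θ t) (A : ℝ) :
    (A + t * θ t) / (B + θ t) = A / B + (t - A / B) * (θ t / (B + θ t)) := by
  have : B + θ t ≠ 0 := by linarith
  field_simp
  ring

end Weight

/-- For `ψ(t) = (A + t·θ(t))/(B + θ(t))` with `B > 0` and `θ`
nonincreasing and positive, if `ψ(t₀) ≥ t₀` then `ψ(t₀ + ε) > ψ(t₀)` for every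
`ε > 0`. -/
theorem stmt_14
    (A B : ℝ) (hB : 0 < B)
    (θ : ℝ → ℝ) (hθanti : Antitone θ) (hθpos : ∀ t, 0 < θ t)
    (ψ : ℝ → ℝ) (hψ : ∀ t, ψ t = (A + t * θ t) / (B + θ t))
    (t₀ : ℝ) (h : t₀ ≤ ψ t₀) :
    ∀ ε : ℝ, 0 < ε → ψ t₀ < ψ (t₀ + ε) := by
  intro ε hε
  have hψ' t : ψ t = A / B + (t - A / B) * (θ t / (B + θ t)) :=
    (hψ t).trans (div_add_eq_add_sub_mul hB (hθpos t) A)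
  rw [hψ'] at h
  have ht₀ : t₀ ≤ A / B := le_of_le_add_sub_mul (div_add_self_lt_one hB (hθpos t₀)) h
  rw [hψ', hψ']
  exact add_sub_mul_lt_add_sub_mul (antitone_div_add_self hB hθanti hθpos)
    (div_pos (hθpos _) (by linarith [hθpos (t₀ + ε)])) ht₀ (by linarith)
end

section
/- Suppose the uncertainty set is rectangular: A = {(a, b) ∈ ℝ^m × ℝ^m : a_low ≤ a ≤ a_high and b_low ≤ b ≤ b_high componentwise, and b_i = b_j for all i, j ∈ V_n, for every n}, where a_low ≤ a_high componentwise, 0 < b_low ≤ b_high componentwise, and b_low and b_high are constant on each partition V_n. Then the robust pricing problem is equivalent to the deterministic pricing problem with parameters (a_low, b_high): sup_{x∈ℝ^m} inf_{(a,b)∈A} Φ(x, a, b) = sup_{x∈ℝ^m} Φ(x, a_low, b_high). -/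
open Real Set

private lemma iSup_eq_iSup_of {ι : Sort*} [Nonempty ι] {f g : ι → ℝ}
    (h1 : ∀ x, f x ≤ g x) (h2 : ∀ x, ∃ y, g x ≤ f y) :
    (⨆ x, f x) = ⨆ x, g x := by
  by_cases hb : BddAbove (Set.range g)
  · have hbf : BddAbove (Set.range f) := by
      obtain ⟨B, hB⟩ := hb
      exact ⟨B, by rintro _ ⟨x, rfl⟩; exact (h1 x).trans (hB ⟨x, rfl⟩)⟩
    apply le_antisymm
    · exact ciSup_le fun x => (h1 x).trans (le_ciSup hb x)
    · refine ciSup_le fun x => ?_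
      obtain ⟨y, hy⟩ := h2 x
      exact hy.trans (le_ciSup hbf y)
  · have hbf : ¬ BddAbove (Set.range f) := by
      rintro ⟨B, hB⟩
      apply hb
      refine ⟨B, ?_⟩
      rintro _ ⟨x, rfl⟩
      obtain ⟨y, hy⟩ := h2 x
      exact hy.trans (hB ⟨y, rfl⟩)
    rw [Real.iSup_of_not_bddAbove hb, Real.iSup_of_not_bddAbove hbf]

private lemma le_of_cond_deriv (ψ ψ' : ℝ → ℝ)
    (hd : ∀ t, HasDerivAt ψ (ψ' t) t) (c : ℝ)
    (hcond : ∀ t ∈ Set.Icc (0:ℝ) 1, ψ t < c → 0 ≤ ψ' t) :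
    ∀ t ∈ Set.Icc (0:ℝ) 1, min (ψ 0) c ≤ ψ t := by
  have hdiff : Differentiable ℝ ψ := fun t => (hd t).differentiableAt
  have hcont : Continuous ψ := hdiff.continuous
  by_contra hcon
  push_neg at hcon
  obtain ⟨t1, ht1, ht1lt⟩ := hcon
  set L : ℝ := min (ψ 0) c with hL
  set L' : ℝ := (ψ t1 + L) / 2 with hL'
  have hL'1 : ψ t1 < L' := by simp only [hL']; linarith
  have hL'2 : L' < L := by simp only [hL']; linarith
  set C : Set ℝ := {t ∈ Set.Icc 0 t1 | ψ t ≤ L'} with hC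
  have hCclosed : IsClosed C := by
    apply IsClosed.inter isClosed_Icc
    exact isClosed_le hcont continuous_const
  have hCne : C.Nonempty := ⟨t1, ⟨Set.mem_Icc.2 ⟨ht1.1, le_refl _⟩, hL'1.le⟩⟩
  have hCbdd : BddBelow C := ⟨0, fun t ht => ht.1.1⟩
  have ht0mem : sInf C ∈ C := hCclosed.csInf_mem hCne hCbdd
  set t0 : ℝ := sInf C with ht0
  have ht0pos : 0 < t0 := by
    rcases lt_or_ge 0 t0 with h | h
    · exact h
    · exfalso
      have h0' : t0 = 0 := le_antisymm h ht0mem.1.1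
      have h1 : ψ t0 ≤ L' := ht0mem.2
      rw [h0'] at h1
      have h2 : L ≤ ψ 0 := min_le_left _ _
      linarith
  set D : Set ℝ := {t ∈ Set.Icc 0 t0 | L ≤ ψ t} with hD
  have hDclosed : IsClosed D := by
    apply IsClosed.inter isClosed_Icc
    exact isClosed_le continuous_const hcont
  have hDne : D.Nonempty := ⟨0, ⟨Set.mem_Icc.2 ⟨le_refl _, ht0pos.le⟩, min_le_left _ _⟩⟩
  have hDbdd : BddAbove D := ⟨t0, fun t ht => ht.1.2⟩
  have ht2mem : sSup D ∈ D := hDclosed.csSup_mem hDne hDbdd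
  set t2 : ℝ := sSup D with ht2
  have ht2lt : t2 < t0 := by
    rcases lt_or_ge t2 t0 with h | h
    · exact h
    · exfalso
      have : t2 = t0 := le_antisymm ht2mem.1.2 h
      have h1 : L ≤ ψ t0 := this ▸ ht2mem.2
      linarith [ht0mem.2]
  have hsmall : ∀ s, t2 < s → s ≤ t0 → ψ s < L := by
    intro s hs1 hs2
    by_contra hge
    push_neg at hge
    have : s ∈ D := ⟨Set.mem_Icc.2 ⟨le_trans ht2mem.1.1 (le_of_lt hs1), hs2⟩, hge⟩
    exact absurd (le_csSup hDbdd this) (not_le.2 hs1)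
  have hmono : MonotoneOn ψ (Set.Icc t2 t0) := by
    apply monotoneOn_of_deriv_nonneg (convex_Icc _ _) hcont.continuousOn
      (hdiff.differentiableOn)
    intro s hs
    rw [interior_Icc] at hs
    have hψs : ψ s < L := hsmall s hs.1 hs.2.le
    have hsIcc : s ∈ Set.Icc (0:ℝ) 1 := by
      constructor
      · exact le_trans ht2mem.1.1 hs.1.le
      · exact le_trans hs.2.le (le_trans ht0mem.1.2 ht1.2)
    rw [(hd s).deriv]
    exact hcond s hsIcc (lt_of_lt_of_le hψs (min_le_right _ _))
  have := hmono (Set.mem_Icc.2 ⟨le_refl _, ht2lt.le⟩)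
    (Set.mem_Icc.2 ⟨ht2lt.le, le_refl _⟩) ht2lt.le
  have h1 : L ≤ ψ t0 := le_trans ht2mem.2 this
  linarith [ht0mem.2]

private lemma mono_of_cond_deriv_above (ψ ψ' : ℝ → ℝ)
    (hd : ∀ t, HasDerivAt ψ (ψ' t) t) (M : ℝ) (h0 : M < ψ 0)
    (hcond : ∀ t ∈ Set.Icc (0:ℝ) 1, M < ψ t → 0 ≤ ψ' t) :
    ψ 0 ≤ ψ 1 := by
  have hdiff : Differentiable ℝ ψ := fun t => (hd t).differentiableAt
  have hcont : Continuous ψ := hdiff.continuous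
  have habove : ∀ t ∈ Set.Icc (0:ℝ) 1, M < ψ t := by
    by_contra hcon
    push_neg at hcon
    obtain ⟨t1, ht1, ht1le⟩ := hcon
    set C : Set ℝ := {t ∈ Set.Icc 0 t1 | ψ t ≤ M} with hC
    have hCclosed : IsClosed C :=
      IsClosed.inter isClosed_Icc (isClosed_le hcont continuous_const)
    have hCne : C.Nonempty := ⟨t1, ⟨Set.mem_Icc.2 ⟨ht1.1, le_refl _⟩, ht1le⟩⟩
    have hCbdd : BddBelow C := ⟨0, fun t ht => ht.1.1⟩
    have ht0mem : sInf C ∈ C := hCclosed.csInf_mem hCne hCbdd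
    set t0 : ℝ := sInf C with ht0
    have ht0pos : 0 < t0 := by
      rcases lt_or_ge 0 t0 with h | h
      · exact h
      · exfalso
        have h0' : t0 = 0 := le_antisymm h ht0mem.1.1
        have := ht0mem.2
        rw [h0'] at this
        linarith
    have hgt : ∀ s, 0 ≤ s → s < t0 → M < ψ s := by
      intro s hs1 hs2
      by_contra hle
      push_neg at hle
      have hmem : s ∈ C := ⟨Set.mem_Icc.2 ⟨hs1, le_trans hs2.le ht0mem.1.2⟩, hle⟩
      exact absurd (csInf_le hCbdd hmem) (not_le.2 hs2)
    have hmono : MonotoneOn ψ (Set.Icc 0 t0) := by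
      apply monotoneOn_of_deriv_nonneg (convex_Icc _ _) hcont.continuousOn
        (hdiff.differentiableOn)
      intro s hs
      rw [interior_Icc] at hs
      have hsIcc : s ∈ Set.Icc (0:ℝ) 1 :=
        ⟨hs.1.le, le_trans hs.2.le (le_trans ht0mem.1.2 ht1.2)⟩
      rw [(hd s).deriv]
      exact hcond s hsIcc (hgt s hs.1.le hs.2)
    have := hmono (Set.mem_Icc.2 ⟨le_refl _, ht0pos.le⟩)
      (Set.mem_Icc.2 ⟨ht0pos.le, le_refl _⟩) ht0pos.le
    linarith [ht0mem.2]
  have hmono : MonotoneOn ψ (Set.Icc (0:ℝ) 1) := by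
    apply monotoneOn_of_deriv_nonneg (convex_Icc _ _) hcont.continuousOn
      (hdiff.differentiableOn)
    intro s hs
    rw [interior_Icc] at hs
    have hsIcc : s ∈ Set.Icc (0:ℝ) 1 := ⟨hs.1.le, hs.2.le⟩
    rw [(hd s).deriv]
    exact hcond s hsIcc (habove s hsIcc)
  exact hmono (Set.mem_Icc.2 ⟨le_refl _, zero_le_one⟩)
    (Set.mem_Icc.2 ⟨zero_le_one, le_refl _⟩) zero_le_one

section OneNest

variable {ι : Type*} [Fintype ι] [DecidableEq ι]

private lemma isOpen_posOrth : IsOpen {Y : ι → ℝ | ∀ i, 0 < Y i} := by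
  have h : {Y : ι → ℝ | ∀ i, 0 < Y i} = ⋂ i, (fun Y : ι → ℝ => Y i) ⁻¹' Set.Ioi 0 := by
    ext Y; simp [Set.mem_iInter]
  rw [h]
  exact isOpen_iInter_of_finite fun i => (continuous_apply i).isOpen_preimage _ isOpen_Ioi

private lemma single_eq_smul (i : ι) (r : ℝ) :
    (Pi.single i r : ι → ℝ) = r • (Pi.single i 1 : ι → ℝ) := by
  funext j
  simp only [Pi.single_apply, Pi.smul_apply, smul_eq_mul]
  split <;> simp

private lemma clm_eval_sum (L : (ι → ℝ) →L[ℝ] ℝ) (v : ι → ℝ) :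
    L v = ∑ i, v i * L (Pi.single i 1) := by
  conv_lhs => rw [← Finset.univ_sum_single v, map_sum]
  refine Finset.sum_congr rfl fun i _ => ?_
  rw [single_eq_smul i (v i), map_smul, smul_eq_mul]

variable {g : (ι → ℝ) → ℝ}

private lemma hasFDerivAt_of_pos (hsmooth : ContDiffOn ℝ 2 g {Y : ι → ℝ | ∀ i, 0 < Y i})
    {Y : ι → ℝ} (hY : ∀ i, 0 < Y i) : HasFDerivAt g (fderiv ℝ g Y) Y := by
  have hmem : {Y : ι → ℝ | ∀ i, 0 < Y i} ∈ nhds Y := isOpen_posOrth.mem_nhds hY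
  exact ((hsmooth.contDiffAt hmem).differentiableAt (by norm_num)).hasFDerivAt

private lemma euler (hsmooth : ContDiffOn ℝ 2 g {Y : ι → ℝ | ∀ i, 0 < Y i})
    (hhom : ∀ lam : ℝ, 0 < lam → ∀ Y : ι → ℝ, (∀ i, 0 < Y i) → g (lam • Y) = lam * g Y)
    {Y : ι → ℝ} (hY : ∀ i, 0 < Y i) : fderiv ℝ g Y Y = g Y := by
  have hd := hasFDerivAt_of_pos hsmooth hY
  have hpath : HasDerivAt (fun t : ℝ => t • Y) Y 1 := by
    simpa using (hasDerivAt_id (1:ℝ)).smul_const Y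
  have hd1 : HasFDerivAt g (fderiv ℝ g Y) ((fun t : ℝ => t • Y) 1) := by
    simpa [one_smul] using hd
  have hcomp := hd1.comp_hasDerivAt 1 hpath
  have heq : (fun t : ℝ => t * g Y) =ᶠ[nhds 1] (fun t => g (t • Y)) := by
    filter_upwards [isOpen_Ioi.mem_nhds zero_lt_one] with t ht
    exact (hhom t ht Y hY).symm
  have hconst : HasDerivAt (fun t : ℝ => t * g Y) (fderiv ℝ g Y Y) 1 :=
    HasDerivAt.congr_of_eventuallyEq hcomp heq
  have hconst2 : HasDerivAt (fun t : ℝ => t * g Y) (g Y) 1 := by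
    simpa using (hasDerivAt_id (1:ℝ)).mul_const (g Y)
  exact hconst.unique hconst2

private lemma euler_sum (hsmooth : ContDiffOn ℝ 2 g {Y : ι → ℝ | ∀ i, 0 < Y i})
    (hhom : ∀ lam : ℝ, 0 < lam → ∀ Y : ι → ℝ, (∀ i, 0 < Y i) → g (lam • Y) = lam * g Y)
    {Y : ι → ℝ} (hY : ∀ i, 0 < Y i) :
    g Y = ∑ i, Y i * fderiv ℝ g Y (Pi.single i 1) := by
  rw [← euler hsmooth hhom hY, clm_eval_sum]

private lemma gpos [Nonempty ι] (hsmooth : ContDiffOn ℝ 2 g {Y : ι → ℝ | ∀ i, 0 < Y i})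
    (hhom : ∀ lam : ℝ, 0 < lam → ∀ Y : ι → ℝ, (∀ i, 0 < Y i) → g (lam • Y) = lam * g Y)
    (hd1 : ∀ Y : ι → ℝ, (∀ i, 0 < Y i) → ∀ i, 0 < fderiv ℝ g Y (Pi.single i 1))
    {Y : ι → ℝ} (hY : ∀ i, 0 < Y i) : 0 < g Y := by
  rw [euler_sum hsmooth hhom hY]
  exact Finset.sum_pos (fun i _ => mul_pos (hY i) (hd1 Y hY i)) Finset.univ_nonempty

private lemma grad_nonneg (hd1 : ∀ Y : ι → ℝ, (∀ i, 0 < Y i) → ∀ i, 0 < fderiv ℝ g Y (Pi.single i 1))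
    {Y : ι → ℝ} (hY : ∀ i, 0 < Y i) {v : ι → ℝ} (hv : ∀ i, 0 ≤ v i) :
    0 ≤ fderiv ℝ g Y v := by
  rw [clm_eval_sum]
  exact Finset.sum_nonneg fun i _ => mul_nonneg (hv i) (hd1 Y hY i).le

private lemma grad_ray (hsmooth : ContDiffOn ℝ 2 g {Y : ι → ℝ | ∀ i, 0 < Y i})
    (hhom : ∀ lam : ℝ, 0 < lam → ∀ Y : ι → ℝ, (∀ i, 0 < Y i) → g (lam • Y) = lam * g Y)
    {Y : ι → ℝ} (hY : ∀ i, 0 < Y i) {lam : ℝ} (hlam : 0 < lam) :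
    fderiv ℝ g (lam • Y) = fderiv ℝ g Y := by
  have hYlam : ∀ i, 0 < (lam • Y) i := by
    intro i; simpa [smul_eq_mul] using mul_pos hlam (hY i)
  have hdl := hasFDerivAt_of_pos hsmooth hYlam
  have hmap : HasFDerivAt (fun W : ι → ℝ => lam • W)
      (lam • ContinuousLinearMap.id ℝ (ι → ℝ)) Y := by
    have heqf : (fun W : ι → ℝ => lam • W)
        = ⇑(lam • ContinuousLinearMap.id ℝ (ι → ℝ)) := by
      funext W; simp
    rw [heqf]
    exact (lam • ContinuousLinearMap.id ℝ (ι → ℝ)).hasFDerivAt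
  have hcomp : HasFDerivAt (fun W : ι → ℝ => g (lam • W))
      ((fderiv ℝ g (lam • Y)).comp (lam • ContinuousLinearMap.id ℝ (ι → ℝ))) Y :=
    HasFDerivAt.comp Y hdl hmap
  have heq : (fun W : ι → ℝ => lam * g W) =ᶠ[nhds Y] (fun W => g (lam • W)) := by
    filter_upwards [isOpen_posOrth.mem_nhds hY] with W hW
    exact (hhom lam hlam W hW).symm
  have h3 : HasFDerivAt (fun W : ι → ℝ => lam * g W)
      ((fderiv ℝ g (lam • Y)).comp (lam • ContinuousLinearMap.id ℝ (ι → ℝ))) Y :=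
    hcomp.congr_of_eventuallyEq heq
  have h2 : HasFDerivAt (fun W : ι → ℝ => lam * g W) (lam • fderiv ℝ g Y) Y :=
    (hasFDerivAt_of_pos hsmooth hY).const_mul lam
  have huniq := h3.unique h2
  ext v
  have hv := congrArg (fun (L : (ι → ℝ) →L[ℝ] ℝ) => L v) huniq
  have hleft : ((fderiv ℝ g (lam • Y)).comp
      (lam • ContinuousLinearMap.id ℝ (ι → ℝ))) v
      = lam * fderiv ℝ g (lam • Y) v := by
    simp only [ContinuousLinearMap.comp_apply, ContinuousLinearMap.smul_apply,
      ContinuousLinearMap.id_apply, map_smul, smul_eq_mul]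
  have hright : (lam • fderiv ℝ g Y) v = lam * fderiv ℝ g Y v := by
    simp only [ContinuousLinearMap.smul_apply, smul_eq_mul]
  simp only [hleft, hright] at hv
  exact mul_left_cancel₀ (ne_of_gt hlam) hv

private lemma hasFDerivAt_fderiv (hsmooth : ContDiffOn ℝ 2 g {Y : ι → ℝ | ∀ i, 0 < Y i})
    {Y : ι → ℝ} (hY : ∀ i, 0 < Y i) :
    HasFDerivAt (fderiv ℝ g) (fderiv ℝ (fderiv ℝ g) Y) Y := by
  have hmem : {Y : ι → ℝ | ∀ i, 0 < Y i} ∈ nhds Y := isOpen_posOrth.mem_nhds hY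
  have h2 : ContDiffAt ℝ 2 g Y := hsmooth.contDiffAt hmem
  have h1 : ContDiffAt ℝ 1 (fderiv ℝ g) Y := h2.fderiv_right (by norm_num)
  exact (h1.differentiableAt (by norm_num)).hasFDerivAt

private lemma hess_symm (hsmooth : ContDiffOn ℝ 2 g {Y : ι → ℝ | ∀ i, 0 < Y i})
    {Y : ι → ℝ} (hY : ∀ i, 0 < Y i) (v w : ι → ℝ) :
    fderiv ℝ (fderiv ℝ g) Y v w = fderiv ℝ (fderiv ℝ g) Y w v := by
  have hev : ∀ᶠ W in nhds Y, HasFDerivAt g (fderiv ℝ g W) W := by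
    filter_upwards [isOpen_posOrth.mem_nhds hY] with W hW
    exact hasFDerivAt_of_pos hsmooth hW
  exact second_derivative_symmetric_of_eventually (f := g) (f' := fderiv ℝ g) hev
    (hasFDerivAt_fderiv hsmooth hY) v w

private lemma hess_offdiag (hsmooth : ContDiffOn ℝ 2 g {Y : ι → ℝ | ∀ i, 0 < Y i})
    (hd2 : ∀ Y : ι → ℝ, (∀ i, 0 < Y i) → ∀ i j, i ≠ j →
      fderiv ℝ (fun W => fderiv ℝ g W (Pi.single i 1)) Y (Pi.single j 1) ≤ 0)
    {Y : ι → ℝ} (hY : ∀ i, 0 < Y i) {i j : ι} (hij : i ≠ j) :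
    fderiv ℝ (fderiv ℝ g) Y (Pi.single j 1) (Pi.single i 1) ≤ 0 := by
  have h := hd2 Y hY i j hij
  have hc := hasFDerivAt_fderiv hsmooth hY
  have happ : HasFDerivAt (fun W => fderiv ℝ g W (Pi.single i 1))
      ((fderiv ℝ (fderiv ℝ g) Y).flip (Pi.single i 1)) Y := by
    have h0 := hc.clm_apply (hasFDerivAt_const (Pi.single i (1:ℝ)) Y)
    simpa using h0
  rw [happ.fderiv] at h
  simpa [ContinuousLinearMap.flip_apply] using h

private lemma hess_row_zero (hsmooth : ContDiffOn ℝ 2 g {Y : ι → ℝ | ∀ i, 0 < Y i})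
    (hhom : ∀ lam : ℝ, 0 < lam → ∀ Y : ι → ℝ, (∀ i, 0 < Y i) → g (lam • Y) = lam * g Y)
    {Y : ι → ℝ} (hY : ∀ i, 0 < Y i) :
    fderiv ℝ (fderiv ℝ g) Y Y = 0 := by
  have hpath : HasDerivAt (fun t : ℝ => t • Y) Y 1 := by
    simpa using (hasDerivAt_id (1:ℝ)).smul_const Y
  have hd1 : HasFDerivAt (fderiv ℝ g) (fderiv ℝ (fderiv ℝ g) Y) ((fun t : ℝ => t • Y) 1) := by
    simpa [one_smul] using hasFDerivAt_fderiv hsmooth hY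
  have hcomp := hd1.comp_hasDerivAt 1 hpath
  have heq : (fun _ : ℝ => fderiv ℝ g Y) =ᶠ[nhds 1]
      (fun t => fderiv ℝ g (t • Y)) := by
    filter_upwards [isOpen_Ioi.mem_nhds zero_lt_one] with t ht
    exact (grad_ray hsmooth hhom hY ht).symm
  have hconst : HasDerivAt (fun _ : ℝ => fderiv ℝ g Y) (fderiv ℝ (fderiv ℝ g) Y Y) 1 :=
    HasDerivAt.congr_of_eventuallyEq hcomp heq
  exact hconst.unique (hasDerivAt_const 1 _)

private lemma hess_psd (hsmooth : ContDiffOn ℝ 2 g {Y : ι → ℝ | ∀ i, 0 < Y i})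
    (hhom : ∀ lam : ℝ, 0 < lam → ∀ Y : ι → ℝ, (∀ i, 0 < Y i) → g (lam • Y) = lam * g Y)
    (hd2 : ∀ Y : ι → ℝ, (∀ i, 0 < Y i) → ∀ i j, i ≠ j →
      fderiv ℝ (fun W => fderiv ℝ g W (Pi.single i 1)) Y (Pi.single j 1) ≤ 0)
    {Y : ι → ℝ} (hY : ∀ i, 0 < Y i) (z : ι → ℝ) :
    0 ≤ fderiv ℝ (fderiv ℝ g) Y z z := by
  set H := fderiv ℝ (fderiv ℝ g) Y with hH
  set u : ι → ℝ := fun i => z i / Y i with hu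
  have hz : z = fun i => u i * Y i := by
    funext i
    rw [hu]
    exact (div_mul_cancel₀ (z i) (ne_of_gt (hY i))).symm
  -- expansion of H z z
  have hexp : H z z = ∑ j, ∑ i, (u j * Y j) * ((u i * Y i) * H (Pi.single j 1) (Pi.single i 1)) := by
    have h1 : H z = ∑ j, z j • H (Pi.single j 1) := by
      conv_lhs => rw [← Finset.univ_sum_single z, map_sum]
      refine Finset.sum_congr rfl fun j _ => ?_
      rw [single_eq_smul j (z j), map_smul]
    calc H z z = ∑ j, z j * (H (Pi.single j 1) z) := by
          rw [h1]; simp [ContinuousLinearMap.sum_apply, ContinuousLinearMap.smul_apply,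
            smul_eq_mul]
      _ = ∑ j, ∑ i, (u j * Y j) * ((u i * Y i) * H (Pi.single j 1) (Pi.single i 1)) := by
          refine Finset.sum_congr rfl fun j _ => ?_
          rw [clm_eval_sum (H (Pi.single j 1)) z, Finset.mul_sum]
          refine Finset.sum_congr rfl fun i _ => ?_
          rw [hz]
  set M : ι → ι → ℝ := fun i j => Y i * Y j * H (Pi.single j 1) (Pi.single i 1) with hM
  have hMsymm : ∀ i j, M i j = M j i := by
    intro i j
    simp only [hM]
    rw [hess_symm hsmooth hY]
    ring
  have hMrow : ∀ i, ∑ j, M i j = 0 := by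
    intro i
    have hrow : H Y (Pi.single i 1) = 0 := by
      rw [hess_row_zero hsmooth hhom hY]; simp
    have hHY : H Y (Pi.single i 1) = ∑ j, Y j * H (Pi.single j 1) (Pi.single i 1) := by
      have h1 : H Y = ∑ j, Y j • H (Pi.single j 1) := by
        conv_lhs => rw [← Finset.univ_sum_single Y, map_sum]
        refine Finset.sum_congr rfl fun j _ => ?_
        rw [single_eq_smul j (Y j), map_smul]
      rw [h1]
      simp [ContinuousLinearMap.sum_apply, ContinuousLinearMap.smul_apply, smul_eq_mul]
    calc ∑ j, M i j = Y i * ∑ j, Y j * H (Pi.single j 1) (Pi.single i 1) := by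
          rw [Finset.mul_sum]
          refine Finset.sum_congr rfl fun j _ => ?_
          simp only [hM]; ring
      _ = Y i * (H Y (Pi.single i 1)) := by rw [hHY]
      _ = 0 := by rw [hrow, mul_zero]
  have hMcol : ∀ j, ∑ i, M i j = 0 := by
    intro j
    calc ∑ i, M i j = ∑ i, M j i := Finset.sum_congr rfl fun i _ => hMsymm i j
      _ = 0 := hMrow j
  have hquad : H z z = ∑ i, ∑ j, u i * u j * M i j := by
    rw [hexp, Finset.sum_comm]
    refine Finset.sum_congr rfl fun i _ => Finset.sum_congr rfl fun j _ => ?_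
    simp only [hM]; ring
  have hkey : ∑ i, ∑ j, (u i - u j)^2 * M i j
      = -2 * ∑ i, ∑ j, u i * u j * M i j := by
    have hsplit : ∀ i j, (u i - u j)^2 * M i j
        = u i^2 * M i j + u j^2 * M i j - 2 * (u i * u j * M i j) := by
      intro i j; ring
    have h1 : ∑ i, ∑ j, u i^2 * M i j = 0 := by
      refine Finset.sum_eq_zero fun i _ => ?_
      rw [← Finset.mul_sum, hMrow, mul_zero]
    have h2 : ∑ i, ∑ j, u j^2 * M i j = 0 := by
      rw [Finset.sum_comm]
      refine Finset.sum_eq_zero fun j _ => ?_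
      rw [show ∑ i, u j ^ 2 * M i j = u j^2 * ∑ i, M i j by rw [Finset.mul_sum], hMcol,
        mul_zero]
    calc ∑ i, ∑ j, (u i - u j)^2 * M i j
        = ∑ i, ∑ j, (u i^2 * M i j + u j^2 * M i j - 2 * (u i * u j * M i j)) := by
          refine Finset.sum_congr rfl fun i _ => Finset.sum_congr rfl fun j _ => hsplit i j
      _ = (∑ i, ∑ j, u i^2 * M i j) + (∑ i, ∑ j, u j^2 * M i j)
            - ∑ i, ∑ j, 2 * (u i * u j * M i j) := by
          rw [← Finset.sum_add_distrib, ← Finset.sum_sub_distrib]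
          refine Finset.sum_congr rfl fun i _ => ?_
          rw [← Finset.sum_add_distrib, ← Finset.sum_sub_distrib]
      _ = (∑ i, ∑ j, u i^2 * M i j) + (∑ i, ∑ j, u j^2 * M i j)
            - 2 * ∑ i, ∑ j, u i * u j * M i j := by
          congr 1
          rw [Finset.mul_sum]
          refine Finset.sum_congr rfl fun i _ => ?_
          rw [Finset.mul_sum]
      _ = -2 * ∑ i, ∑ j, u i * u j * M i j := by rw [h1, h2]; ring
  have hterm : ∀ i j, (u i - u j)^2 * M i j ≤ 0 := by
    intro i j
    rcases eq_or_ne i j with rfl | hij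
    · simp
    · have hM0 : M i j ≤ 0 := by
        simp only [hM]
        have := hess_offdiag hsmooth hd2 hY (i := i) (j := j) hij
        have hYY : 0 < Y i * Y j := mul_pos (hY i) (hY j)
        exact mul_nonpos_of_nonneg_of_nonpos hYY.le this
      exact mul_nonpos_of_nonneg_of_nonpos (sq_nonneg _) hM0
  have hsumneg : ∑ i, ∑ j, (u i - u j)^2 * M i j ≤ 0 :=
    Finset.sum_nonpos fun i _ => Finset.sum_nonpos fun j _ => hterm i j
  rw [hquad]
  nlinarith [hkey, hsumneg]

private lemma grad_log_ineq [Nonempty ι]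
    (hsmooth : ContDiffOn ℝ 2 g {Y : ι → ℝ | ∀ i, 0 < Y i})
    (hhom : ∀ lam : ℝ, 0 < lam → ∀ Y : ι → ℝ, (∀ i, 0 < Y i) → g (lam • Y) = lam * g Y)
    (hd1 : ∀ Y : ι → ℝ, (∀ i, 0 < Y i) → ∀ i, 0 < fderiv ℝ g Y (Pi.single i 1))
    (hd2 : ∀ Y : ι → ℝ, (∀ i, 0 < Y i) → ∀ i j, i ≠ j →
      fderiv ℝ (fun W => fderiv ℝ g W (Pi.single i 1)) Y (Pi.single j 1) ≤ 0)
    (v w : ι → ℝ) :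
    ∑ i, (w i - v i) * (Real.exp (v i) *
        fderiv ℝ g (fun j => Real.exp (v j)) (Pi.single i 1))
      ≤ g (fun j => Real.exp (v j)) *
        (Real.log (g (fun j => Real.exp (w j))) - Real.log (g (fun j => Real.exp (v j)))) := by
  set u : ι → ℝ := fun i => w i - v i with hu
  set Yt : ℝ → ι → ℝ := fun t j => Real.exp (v j + t * u j) with hYt
  have hpos : ∀ t, ∀ j, 0 < Yt t j := fun t j => Real.exp_pos _
  have hYt' : ∀ t, HasDerivAt (fun s => Yt s) (fun j => u j * Yt t j) t := by
    intro t
    rw [hasDerivAt_pi]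
    intro j
    have h1 : HasDerivAt (fun s : ℝ => v j + s * u j) (u j) t := by
      simpa using ((hasDerivAt_id t).mul_const (u j)).const_add (v j)
    have h2 := h1.exp
    simpa [hYt, mul_comm] using h2
  set G : ℝ → ℝ := fun t => g (Yt t) with hG
  set Nf : ℝ → ℝ := fun t => fderiv ℝ g (Yt t) (fun j => u j * Yt t j) with hNf
  have hGpos : ∀ t, 0 < G t := fun t => gpos hsmooth hhom hd1 (hpos t)
  have hG' : ∀ t, HasDerivAt G (Nf t) t := fun t =>
    (hasFDerivAt_of_pos hsmooth (hpos t)).comp_hasDerivAt t (hYt' t)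
  have hNf' : ∀ t, HasDerivAt Nf
      (fderiv ℝ (fderiv ℝ g) (Yt t) (fun j => u j * Yt t j) (fun j => u j * Yt t j)
        + fderiv ℝ g (Yt t) (fun j => u j * (u j * Yt t j))) t := by
    intro t
    have hc : HasDerivAt (fun s => fderiv ℝ g (Yt s))
        (fderiv ℝ (fderiv ℝ g) (Yt t) (fun j => u j * Yt t j)) t :=
      (hasFDerivAt_fderiv hsmooth (hpos t)).comp_hasDerivAt t (hYt' t)
    have hu' : HasDerivAt (fun s => (fun j => u j * Yt s j))
        (fun j => u j * (u j * Yt t j)) t := by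
      rw [hasDerivAt_pi]
      intro j
      exact ((hasDerivAt_pi.1 (hYt' t)) j).const_mul (u j)
    exact hc.clm_apply hu'
  have hnum : ∀ t, 0 ≤ (fderiv ℝ (fderiv ℝ g) (Yt t) (fun j => u j * Yt t j) (fun j => u j * Yt t j)
        + fderiv ℝ g (Yt t) (fun j => u j * (u j * Yt t j))) * G t - Nf t * Nf t := by
    intro t
    have hP : 0 ≤ fderiv ℝ (fderiv ℝ g) (Yt t) (fun j => u j * Yt t j) (fun j => u j * Yt t j) :=
      hess_psd hsmooth hhom hd2 (hpos t) _
    have hCS : Nf t * Nf t ≤ fderiv ℝ g (Yt t) (fun j => u j * (u j * Yt t j)) * G t := by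
      have hYD : ∀ j, 0 ≤ Yt t j * fderiv ℝ g (Yt t) (Pi.single j 1) :=
        fun j => mul_nonneg (hpos t j).le (hd1 _ (hpos t) j).le
      have hNexp : Nf t = ∑ j, (u j * Real.sqrt (Yt t j * fderiv ℝ g (Yt t) (Pi.single j 1)))
          * Real.sqrt (Yt t j * fderiv ℝ g (Yt t) (Pi.single j 1)) := by
        simp only [hNf]
        rw [clm_eval_sum]
        refine Finset.sum_congr rfl fun j _ => ?_
        have hss := Real.mul_self_sqrt (hYD j)
        linear_combination (u j) * hss.symm
      have hQexp : fderiv ℝ g (Yt t) (fun j => u j * (u j * Yt t j))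
          = ∑ j, (u j * Real.sqrt (Yt t j * fderiv ℝ g (Yt t) (Pi.single j 1)))^2 := by
        rw [clm_eval_sum]
        refine Finset.sum_congr rfl fun j _ => ?_
        have hss := Real.mul_self_sqrt (hYD j)
        linear_combination (u j)^2 * hss.symm
      have hGexp : G t = ∑ j, (Real.sqrt (Yt t j * fderiv ℝ g (Yt t) (Pi.single j 1)))^2 := by
        simp only [hG]
        rw [euler_sum hsmooth hhom (hpos t)]
        refine Finset.sum_congr rfl fun j _ => ?_
        rw [Real.sq_sqrt (hYD j)]
      calc Nf t * Nf t = (∑ j, (u j * Real.sqrt (Yt t j * fderiv ℝ g (Yt t) (Pi.single j 1)))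
            * Real.sqrt (Yt t j * fderiv ℝ g (Yt t) (Pi.single j 1)))^2 := by
            rw [← hNexp]; ring
        _ ≤ (∑ j, (u j * Real.sqrt (Yt t j * fderiv ℝ g (Yt t) (Pi.single j 1)))^2)
            * ∑ j, (Real.sqrt (Yt t j * fderiv ℝ g (Yt t) (Pi.single j 1)))^2 :=
            Finset.sum_mul_sq_le_sq_mul_sq _ _ _
        _ = fderiv ℝ g (Yt t) (fun j => u j * (u j * Yt t j)) * G t := by
            rw [hQexp, hGexp]
    nlinarith [hP, hCS, (hGpos t)]
  set Dq : ℝ → ℝ := fun t => Nf t / G t with hDq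
  have hDq' : ∀ t, HasDerivAt Dq
      (((fderiv ℝ (fderiv ℝ g) (Yt t) (fun j => u j * Yt t j) (fun j => u j * Yt t j)
        + fderiv ℝ g (Yt t) (fun j => u j * (u j * Yt t j))) * G t - Nf t * Nf t) / G t ^ 2) t :=
    fun t => (hNf' t).div (hG' t) (ne_of_gt (hGpos t))
  have hmono : Monotone Dq := by
    apply monotone_of_deriv_nonneg (fun t => (hDq' t).differentiableAt)
    intro t
    rw [(hDq' t).deriv]
    exact div_nonneg (hnum t) (sq_nonneg _)
  have hlog : ∀ t, HasDerivAt (fun s => Real.log (G s)) (Dq t) t :=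
    fun t => (hG' t).log (ne_of_gt (hGpos t))
  obtain ⟨ξ, hξmem, hξ⟩ := exists_hasDerivAt_eq_slope (fun s => Real.log (G s)) Dq zero_lt_one
    (fun t _ => (hlog t).continuousAt.continuousWithinAt) (fun t _ => hlog t)
  have hDq0 : Dq 0 ≤ Real.log (G 1) - Real.log (G 0) := by
    have h1 : Dq 0 ≤ Dq ξ := hmono hξmem.1.le
    rw [hξ] at h1
    simpa using h1
  have hfinal : Nf 0 ≤ G 0 * (Real.log (G 1) - Real.log (G 0)) := by
    have h2 : Dq 0 * G 0 ≤ (Real.log (G 1) - Real.log (G 0)) * G 0 :=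
      mul_le_mul_of_nonneg_right hDq0 (hGpos 0).le
    have h3 : Dq 0 * G 0 = Nf 0 := by
      simp only [hDq]
      exact div_mul_cancel₀ (Nf 0) (ne_of_gt (hGpos 0))
    rw [h3] at h2
    linarith
  have hY0 : Yt 0 = fun j => Real.exp (v j) := by
    funext j; simp [hYt]
  have hY1 : Yt 1 = fun j => Real.exp (w j) := by
    funext j
    simp only [hYt, hu]
    rw [show v j + 1 * (w j - v j) = w j by ring]
  have hNf0 : Nf 0 = ∑ i, (w i - v i) * (Real.exp (v i) *
      fderiv ℝ g (fun j => Real.exp (v j)) (Pi.single i 1)) := by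
    simp only [hNf, hY0, hu]
    rw [clm_eval_sum]
    refine Finset.sum_congr rfl fun i _ => ?_
    ring
  rw [← hNf0]
  have hG1 : G 1 = g (fun j => Real.exp (w j)) := by simp only [hG, hY1]
  have hG0 : G 0 = g (fun j => Real.exp (v j)) := by simp only [hG, hY0]
  rw [← hG0, ← hG1]
  exact hfinal

end OneNest

/-- The partition-wise separable CPGF `G(Y) = Σ_n G^n(Y^n)`. -/
noncomputable def Gtot (m N : ℕ) (part : Fin m → Fin N)
    (Gn : ∀ n : Fin N, ({i : Fin m // part i = n} → ℝ) → ℝ)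
    (Y : Fin m → ℝ) : ℝ :=
  ∑ n, Gn n fun i => Y i.1

/-- Expected revenue `Φ(x, a, b)` under the GEV model with CPGF `G = Σ_n G^n`. -/
noncomputable def PhiP (m N : ℕ) (part : Fin m → Fin N)
    (Gn : ∀ n : Fin N, ({i : Fin m // part i = n} → ℝ) → ℝ)
    (c : Fin m → ℝ) (x a b : Fin m → ℝ) : ℝ :=
  (∑ i, (x i - c i) * Real.exp (a i - b i * x i) *
      fderiv ℝ (Gtot m N part Gn) (fun j => Real.exp (a j - b j * x j))
        (Pi.single i 1)) /
    (1 + Gtot m N part Gn fun j => Real.exp (a j - b j * x j))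

section Assembly

variable {m N : ℕ} {part : Fin m → Fin N}
variable {Gn : ∀ n : Fin N, ({i : Fin m // part i = n} → ℝ) → ℝ}

private noncomputable def resCLM (part : Fin m → Fin N) (n : Fin N) :
    (Fin m → ℝ) →L[ℝ] ({i : Fin m // part i = n} → ℝ) :=
  ContinuousLinearMap.pi fun i => ContinuousLinearMap.proj i.1

private lemma resCLM_apply (n : Fin N) (Y : Fin m → ℝ) :
    resCLM part n Y = fun k : {i : Fin m // part i = n} => Y k.1 := rfl

private lemma hasFDerivAt_Gtot
    (hGsmooth : ∀ n, ContDiffOn ℝ 2 (Gn n)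
      {Y : {i : Fin m // part i = n} → ℝ | ∀ i, 0 < Y i})
    {Y : Fin m → ℝ} (hY : ∀ j, 0 < Y j) :
    HasFDerivAt (Gtot m N part Gn)
      (∑ n, (fderiv ℝ (Gn n) (fun k : {i : Fin m // part i = n} => Y k.1)).comp
        (resCLM part n)) Y := by
  have heq : Gtot m N part Gn = fun Z => ∑ n, Gn n (resCLM part n Z) := rfl
  rw [heq]
  apply HasFDerivAt.fun_sum
  intro n _
  have hres : ∀ k : {i : Fin m // part i = n}, 0 < Y k.1 := fun k => hY k.1
  exact (hasFDerivAt_of_pos (hGsmooth n) hres).comp Y (resCLM part n).hasFDerivAt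

private lemma fderiv_Gtot_single
    (hGsmooth : ∀ n, ContDiffOn ℝ 2 (Gn n)
      {Y : {i : Fin m // part i = n} → ℝ | ∀ i, 0 < Y i})
    {Y : Fin m → ℝ} (hY : ∀ j, 0 < Y j) {n : Fin N} {i : Fin m} (h : part i = n) :
    fderiv ℝ (Gtot m N part Gn) Y (Pi.single i 1)
      = fderiv ℝ (Gn n) (fun k : {i : Fin m // part i = n} => Y k.1)
          (Pi.single (⟨i, h⟩ : {i : Fin m // part i = n}) 1) := by
  rw [(hasFDerivAt_Gtot hGsmooth hY).fderiv, ContinuousLinearMap.sum_apply]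
  rw [Finset.sum_eq_single n]
  · simp only [ContinuousLinearMap.comp_apply]
    congr 1
    funext k
    rw [resCLM_apply]
    simp only [Pi.single_apply]
    by_cases hk : k.1 = i
    · simp [hk, Subtype.ext_iff]
    · simp [hk, Subtype.ext_iff]
  · intro n' _ hne
    simp only [ContinuousLinearMap.comp_apply]
    have hzero : resCLM part n' (Pi.single i 1) = 0 := by
      rw [resCLM_apply]
      funext k
      have hki : k.1 ≠ i := by
        intro hk
        exact hne (by rw [← k.2, hk, h])
      simp [Pi.single_apply, hki]
    rw [hzero, map_zero]
  · intro hn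
    exact absurd (Finset.mem_univ n) hn

private lemma phi_formula
    (hGsmooth : ∀ n, ContDiffOn ℝ 2 (Gn n)
      {Y : {i : Fin m // part i = n} → ℝ | ∀ i, 0 < Y i})
    (c x a b : Fin m → ℝ) :
    PhiP m N part Gn c x a b =
      (∑ n, ∑ k : {i : Fin m // part i = n},
          (x k.1 - c k.1) * (Real.exp (a k.1 - b k.1 * x k.1) *
            fderiv ℝ (Gn n)
              (fun j : {i : Fin m // part i = n} => Real.exp (a j.1 - b j.1 * x j.1))
              (Pi.single k 1)))
        / (1 + ∑ n, Gn n
            (fun j : {i : Fin m // part i = n} => Real.exp (a j.1 - b j.1 * x j.1))) := by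
  unfold PhiP
  congr 1
  rw [← Fintype.sum_fiberwise part (fun i => (x i - c i) * Real.exp (a i - b i * x i) *
    fderiv ℝ (Gtot m N part Gn) (fun j => Real.exp (a j - b j * x j)) (Pi.single i 1))]
  refine Finset.sum_congr rfl fun n _ => Finset.sum_congr rfl fun k _ => ?_
  rw [fderiv_Gtot_single hGsmooth (fun j => Real.exp_pos _) k.2]
  ring

private lemma phi_markup
    (hGsmooth : ∀ n, ContDiffOn ℝ 2 (Gn n)
      {Y : {i : Fin m // part i = n} → ℝ | ∀ i, 0 < Y i})
    (hGhom : ∀ n, ∀ lam : ℝ, 0 < lam → ∀ Y : {i : Fin m // part i = n} → ℝ,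
      (∀ i, 0 < Y i) → Gn n (lam • Y) = lam * Gn n Y)
    (c a b : Fin m → ℝ) (r : Fin N → ℝ) (x : Fin m → ℝ)
    (hx : ∀ i, x i = c i + r (part i)) :
    PhiP m N part Gn c x a b =
      (∑ n, r n * Gn n
          (fun j : {i : Fin m // part i = n} => Real.exp (a j.1 - b j.1 * x j.1)))
        / (1 + ∑ n, Gn n
            (fun j : {i : Fin m // part i = n} => Real.exp (a j.1 - b j.1 * x j.1))) := by
  rw [phi_formula hGsmooth]
  congr 1
  refine Finset.sum_congr rfl fun n _ => ?_
  rw [euler_sum (hGsmooth n) (hGhom n) (fun j => Real.exp_pos _), Finset.mul_sum]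
  refine Finset.sum_congr rfl fun k _ => ?_
  have hxk : x k.1 - c k.1 = r n := by rw [hx k.1, k.2]; ring
  rw [hxk]

private lemma phi_lower
    (hpart : ∀ n : Fin N, ∃ i, part i = n)
    (hGsmooth : ∀ n, ContDiffOn ℝ 2 (Gn n)
      {Y : {i : Fin m // part i = n} → ℝ | ∀ i, 0 < Y i})
    (hGhom : ∀ n, ∀ lam : ℝ, 0 < lam → ∀ Y : {i : Fin m // part i = n} → ℝ,
      (∀ i, 0 < Y i) → Gn n (lam • Y) = lam * Gn n Y)
    (hGd1 : ∀ n, ∀ Y : {i : Fin m // part i = n} → ℝ, (∀ i, 0 < Y i) →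
      ∀ i, 0 < fderiv ℝ (Gn n) Y (Pi.single i 1))
    (c x a b : Fin m → ℝ) :
    -(∑ i, |x i - c i|) ≤ PhiP m N part Gn c x a b := by
  haveI : ∀ n : Fin N, Nonempty {i : Fin m // part i = n} :=
    fun n => ⟨⟨(hpart n).choose, (hpart n).choose_spec⟩⟩
  rw [phi_formula hGsmooth]
  set B := ∑ i, |x i - c i| with hBdef
  have hB : 0 ≤ B := Finset.sum_nonneg fun i _ => abs_nonneg _
  set gv : Fin N → ℝ := fun n => Gn n
    (fun j : {i : Fin m // part i = n} => Real.exp (a j.1 - b j.1 * x j.1)) with hgvdef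
  have hgv : ∀ n, 0 < gv n := fun n =>
    gpos (hGsmooth n) (hGhom n) (hGd1 n) (fun j => Real.exp_pos _)
  have hgs : 0 ≤ ∑ n, gv n := Finset.sum_nonneg fun n _ => (hgv n).le
  have hden : (0:ℝ) < 1 + ∑ n, gv n := by linarith
  rw [le_div_iff₀ hden]
  have habs : ∀ i, |x i - c i| ≤ B :=
    fun i => Finset.single_le_sum (f := fun i => |x i - c i|)
      (fun j _ => abs_nonneg _) (Finset.mem_univ i)
  have h1 : ∑ n, (-B) * gv n ≤ ∑ n, ∑ k : {i : Fin m // part i = n},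
      (x k.1 - c k.1) * (Real.exp (a k.1 - b k.1 * x k.1) *
        fderiv ℝ (Gn n)
          (fun j : {i : Fin m // part i = n} => Real.exp (a j.1 - b j.1 * x j.1))
          (Pi.single k 1)) := by
    refine Finset.sum_le_sum fun n _ => ?_
    have heq : (-B) * gv n = ∑ k : {i : Fin m // part i = n},
        (-B) * (Real.exp (a k.1 - b k.1 * x k.1) *
          fderiv ℝ (Gn n)
            (fun j : {i : Fin m // part i = n} => Real.exp (a j.1 - b j.1 * x j.1))
            (Pi.single k 1)) := by
      rw [hgvdef]
      simp only
      rw [euler_sum (hGsmooth n) (hGhom n) (fun j => Real.exp_pos _), Finset.mul_sum]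
    rw [heq]
    refine Finset.sum_le_sum fun k _ => ?_
    have hYD : 0 ≤ Real.exp (a k.1 - b k.1 * x k.1) *
        fderiv ℝ (Gn n)
          (fun j : {i : Fin m // part i = n} => Real.exp (a j.1 - b j.1 * x j.1))
          (Pi.single k 1) :=
      mul_nonneg (Real.exp_pos _).le
        (hGd1 n _ (fun j => Real.exp_pos _) k).le
    refine mul_le_mul_of_nonneg_right ?_ hYD
    have := habs k.1
    have := neg_abs_le (x k.1 - c k.1)
    linarith
  have h2 : ∑ n, (-B) * gv n = (-B) * ∑ n, gv n := by rw [Finset.mul_sum]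
  nlinarith [h1, h2, hB, hgs]

private lemma phi_markup_nonneg
    (hpart : ∀ n : Fin N, ∃ i, part i = n)
    (hGsmooth : ∀ n, ContDiffOn ℝ 2 (Gn n)
      {Y : {i : Fin m // part i = n} → ℝ | ∀ i, 0 < Y i})
    (hGhom : ∀ n, ∀ lam : ℝ, 0 < lam → ∀ Y : {i : Fin m // part i = n} → ℝ,
      (∀ i, 0 < Y i) → Gn n (lam • Y) = lam * Gn n Y)
    (hGd1 : ∀ n, ∀ Y : {i : Fin m // part i = n} → ℝ, (∀ i, 0 < Y i) →
      ∀ i, 0 < fderiv ℝ (Gn n) Y (Pi.single i 1))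
    (c a b : Fin m → ℝ) (r : Fin N → ℝ) (hr : ∀ n, 0 ≤ r n) (x : Fin m → ℝ)
    (hx : ∀ i, x i = c i + r (part i)) :
    0 ≤ PhiP m N part Gn c x a b := by
  haveI : ∀ n : Fin N, Nonempty {i : Fin m // part i = n} :=
    fun n => ⟨⟨(hpart n).choose, (hpart n).choose_spec⟩⟩
  rw [phi_markup hGsmooth hGhom c a b r x hx]
  have hgv : ∀ n, 0 < Gn n
      (fun j : {i : Fin m // part i = n} => Real.exp (a j.1 - b j.1 * x j.1)) := fun n =>
    gpos (hGsmooth n) (hGhom n) (hGd1 n) (fun j => Real.exp_pos _)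
  apply div_nonneg
  · exact Finset.sum_nonneg fun n _ => mul_nonneg (hr n) (hgv n).le
  · have : 0 ≤ ∑ n, Gn n
        (fun j : {i : Fin m // part i = n} => Real.exp (a j.1 - b j.1 * x j.1)) :=
      Finset.sum_nonneg fun n _ => (hgv n).le
    linarith

private lemma phi_path
    (hpart : ∀ n : Fin N, ∃ i, part i = n)
    (hGsmooth : ∀ n, ContDiffOn ℝ 2 (Gn n)
      {Y : {i : Fin m // part i = n} → ℝ | ∀ i, 0 < Y i})
    (hGhom : ∀ n, ∀ lam : ℝ, 0 < lam → ∀ Y : {i : Fin m // part i = n} → ℝ,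
      (∀ i, 0 < Y i) → Gn n (lam • Y) = lam * Gn n Y)
    (hGd1 : ∀ n, ∀ Y : {i : Fin m // part i = n} → ℝ, (∀ i, 0 < Y i) →
      ∀ i, 0 < fderiv ℝ (Gn n) Y (Pi.single i 1))
    (hNne : (Finset.univ : Finset (Fin N)).Nonempty)
    (c aLow bHigh a b : Fin m → ℝ)
    (ha : ∀ i, aLow i ≤ a i) (hb : ∀ i, b i ≤ bHigh i)
    (r : Fin N → ℝ) (x : Fin m → ℝ) (hx : ∀ i, x i = c i + r (part i))
    (hxpos : ∀ i, 0 ≤ x i) :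
    min (PhiP m N part Gn c x aLow bHigh) (Finset.inf' Finset.univ hNne r)
      ≤ PhiP m N part Gn c x a b := by
  haveI : ∀ n : Fin N, Nonempty {i : Fin m // part i = n} :=
    fun n => ⟨⟨(hpart n).choose, (hpart n).choose_spec⟩⟩
  set α : Fin m → ℝ := fun i => aLow i - bHigh i * x i with hα
  set β : Fin m → ℝ := fun i => (a i - aLow i) - (b i - bHigh i) * x i with hβ
  have hβnn : ∀ i, 0 ≤ β i := by
    intro i
    have h1 := ha i
    have h2 := hb i
    have h3 := hxpos i
    simp only [hβ]
    nlinarith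
  set gv : Fin N → ℝ → ℝ := fun n t => Gn n
    (fun k : {i : Fin m // part i = n} => Real.exp (α k.1 + t * β k.1)) with hgv
  set gd : Fin N → ℝ → ℝ := fun n t => fderiv ℝ (Gn n)
    (fun k : {i : Fin m // part i = n} => Real.exp (α k.1 + t * β k.1))
    (fun k : {i : Fin m // part i = n} => β k.1 * Real.exp (α k.1 + t * β k.1)) with hgd
  have hgv' : ∀ n t, HasDerivAt (gv n) (gd n t) t := by
    intro n t
    have hpath : HasDerivAt
        (fun s => (fun k : {i : Fin m // part i = n} => Real.exp (α k.1 + s * β k.1)))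
        (fun k : {i : Fin m // part i = n} => β k.1 * Real.exp (α k.1 + t * β k.1)) t := by
      rw [hasDerivAt_pi]
      intro k
      have h1 : HasDerivAt (fun s : ℝ => α k.1 + s * β k.1) (β k.1) t := by
        simpa using ((hasDerivAt_id t).mul_const (β k.1)).const_add (α k.1)
      simpa [mul_comm] using h1.exp
    exact (hasFDerivAt_of_pos (hGsmooth n) (fun k => Real.exp_pos _)).comp_hasDerivAt
      t hpath
  have hgvpos : ∀ n t, 0 < gv n t := fun n t =>
    gpos (hGsmooth n) (hGhom n) (hGd1 n) (fun k => Real.exp_pos _)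
  have hgdnn : ∀ n t, 0 ≤ gd n t := fun n t =>
    grad_nonneg (hGd1 n) (fun k => Real.exp_pos _)
      (fun k => mul_nonneg (hβnn k.1) (Real.exp_pos _).le)
  set num : ℝ → ℝ := fun t => ∑ n, r n * gv n t with hnum
  set den : ℝ → ℝ := fun t => 1 + ∑ n, gv n t with hden
  have hdenpos : ∀ t, 0 < den t := by
    intro t
    have : 0 ≤ ∑ n, gv n t := Finset.sum_nonneg fun n _ => (hgvpos n t).le
    simp only [hden]
    linarith
  have hnum' : ∀ t, HasDerivAt num (∑ n, r n * gd n t) t := by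
    intro t
    apply HasDerivAt.fun_sum
    intro n _
    exact (hgv' n t).const_mul (r n)
  have hden' : ∀ t, HasDerivAt den (∑ n, gd n t) t := by
    intro t
    have := HasDerivAt.fun_sum (fun n (_ : n ∈ Finset.univ) => hgv' n t)
    exact this.const_add 1
  set ψ : ℝ → ℝ := fun t => num t / den t with hψ
  have hψ' : ∀ t, HasDerivAt ψ
      (((∑ n, r n * gd n t) * den t - num t * ∑ n, gd n t) / den t ^ 2) t :=
    fun t => (hnum' t).div (hden' t) (ne_of_gt (hdenpos t))
  have hcond : ∀ t ∈ Set.Icc (0:ℝ) 1, ψ t < Finset.inf' Finset.univ hNne r →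
      0 ≤ ((∑ n, r n * gd n t) * den t - num t * ∑ n, gd n t) / den t ^ 2 := by
    intro t _ hψt
    apply div_nonneg _ (sq_nonneg _)
    have hkey : (∑ n, r n * gd n t) * den t - num t * ∑ n, gd n t
        = ∑ n, gd n t * (r n * den t - num t) := by
      rw [Finset.sum_mul, Finset.mul_sum, ← Finset.sum_sub_distrib]
      refine Finset.sum_congr rfl fun n _ => ?_
      ring
    rw [hkey]
    refine Finset.sum_nonneg fun n _ => mul_nonneg (hgdnn n t) ?_
    have hrn : ψ t < r n := lt_of_lt_of_le hψt (Finset.inf'_le r (Finset.mem_univ n))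
    have : num t < r n * den t := by
      have := (div_lt_iff₀ (hdenpos t)).1 hrn
      linarith
    linarith
  have hmin := le_of_cond_deriv ψ _ hψ' (Finset.inf' Finset.univ hNne r) hcond 1
    (Set.mem_Icc.2 ⟨zero_le_one, le_refl 1⟩)
  have hg0 : ∀ n, gv n 0 = Gn n
      (fun j : {i : Fin m // part i = n} => Real.exp (aLow j.1 - bHigh j.1 * x j.1)) := by
    intro n
    simp only [hgv]
    congr 1
    funext k
    simp only [hα]
    norm_num
  have hg1 : ∀ n, gv n 1 = Gn n
      (fun j : {i : Fin m // part i = n} => Real.exp (a j.1 - b j.1 * x j.1)) := by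
    intro n
    simp only [hgv]
    congr 1
    funext k
    rw [show α k.1 + 1 * β k.1 = a k.1 - b k.1 * x k.1 by simp only [hα, hβ]; ring]
  have hψ0 : ψ 0 = PhiP m N part Gn c x aLow bHigh := by
    rw [phi_markup hGsmooth hGhom c aLow bHigh r x hx]
    have h1 : num 0 = ∑ n, r n * Gn n
        (fun j : {i : Fin m // part i = n} => Real.exp (aLow j.1 - bHigh j.1 * x j.1)) := by
      simp only [hnum]
      exact Finset.sum_congr rfl fun n _ => by rw [hg0 n]
    have h2 : den 0 = 1 + ∑ n, Gn n
        (fun j : {i : Fin m // part i = n} => Real.exp (aLow j.1 - bHigh j.1 * x j.1)) := by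
      simp only [hden]
      rw [Finset.sum_congr rfl fun n _ => hg0 n]
    simp only [hψ]
    rw [h1, h2]
  have hψ1 : ψ 1 = PhiP m N part Gn c x a b := by
    rw [phi_markup hGsmooth hGhom c a b r x hx]
    have h1 : num 1 = ∑ n, r n * Gn n
        (fun j : {i : Fin m // part i = n} => Real.exp (a j.1 - b j.1 * x j.1)) := by
      simp only [hnum]
      exact Finset.sum_congr rfl fun n _ => by rw [hg1 n]
    have h2 : den 1 = 1 + ∑ n, Gn n
        (fun j : {i : Fin m // part i = n} => Real.exp (a j.1 - b j.1 * x j.1)) := by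
      simp only [hden]
      rw [Finset.sum_congr rfl fun n _ => hg1 n]
    simp only [hψ]
    rw [h1, h2]
  rw [← hψ0, ← hψ1]
  exact hmin

private noncomputable def Phit {N : ℕ} (γ β r : Fin N → ℝ) : ℝ :=
  (∑ n, r n * (γ n * Real.exp (-β n * r n))) / (1 + ∑ n, γ n * Real.exp (-β n * r n))

private lemma phit_eq
    (hGsmooth : ∀ n, ContDiffOn ℝ 2 (Gn n)
      {Y : {i : Fin m // part i = n} → ℝ | ∀ i, 0 < Y i})
    (hGhom : ∀ n, ∀ lam : ℝ, 0 < lam → ∀ Y : {i : Fin m // part i = n} → ℝ,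
      (∀ i, 0 < Y i) → Gn n (lam • Y) = lam * Gn n Y)
    (c aL bU : Fin m → ℝ) (β γ : Fin N → ℝ)
    (hβ : ∀ i, β (part i) = bU i)
    (hγ : ∀ n, γ n = Gn n
      (fun k : {i : Fin m // part i = n} => Real.exp (aL k.1 - bU k.1 * c k.1)))
    (r : Fin N → ℝ) :
    PhiP m N part Gn c (fun i => c i + r (part i)) aL bU = Phit γ β r := by
  rw [phi_markup hGsmooth hGhom c aL bU r _ (fun i => rfl)]
  have hg : ∀ n, Gn n (fun j : {i : Fin m // part i = n} =>
      Real.exp (aL j.1 - bU j.1 * (c j.1 + r (part j.1))))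
      = γ n * Real.exp (-β n * r n) := by
    intro n
    have harg : (fun j : {i : Fin m // part i = n} =>
        Real.exp (aL j.1 - bU j.1 * (c j.1 + r (part j.1))))
        = (Real.exp (-β n * r n)) •
          (fun j : {i : Fin m // part i = n} => Real.exp (aL j.1 - bU j.1 * c j.1)) := by
      funext j
      simp only [Pi.smul_apply, smul_eq_mul, ← Real.exp_add]
      congr 1
      have hj : part j.1 = n := j.2
      have hbj : β n = bU j.1 := by rw [← hβ j.1, hj]
      rw [hj, ← hbj]
      ring
    rw [harg, hGhom n _ (Real.exp_pos _) _ (fun j => Real.exp_pos _), hγ n]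
    ring
  unfold Phit
  congr 1
  · exact Finset.sum_congr rfl fun n _ => by rw [hg n]
  · rw [Finset.sum_congr rfl fun n _ => hg n]

private lemma phi_exchange
    (hpart : ∀ n : Fin N, ∃ i, part i = n)
    (hGsmooth : ∀ n, ContDiffOn ℝ 2 (Gn n)
      {Y : {i : Fin m // part i = n} → ℝ | ∀ i, 0 < Y i})
    (hGhom : ∀ n, ∀ lam : ℝ, 0 < lam → ∀ Y : {i : Fin m // part i = n} → ℝ,
      (∀ i, 0 < Y i) → Gn n (lam • Y) = lam * Gn n Y)
    (hGd1 : ∀ n, ∀ Y : {i : Fin m // part i = n} → ℝ, (∀ i, 0 < Y i) →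
      ∀ i, 0 < fderiv ℝ (Gn n) Y (Pi.single i 1))
    (hGd2 : ∀ n, ∀ Y : {i : Fin m // part i = n} → ℝ, (∀ i, 0 < Y i) →
      ∀ i j, i ≠ j →
        fderiv ℝ (fun W => fderiv ℝ (Gn n) W (Pi.single i 1)) Y (Pi.single j 1) ≤ 0)
    (c aL bU : Fin m → ℝ) (β γ : Fin N → ℝ)
    (hβ : ∀ i, β (part i) = bU i) (hβpos : ∀ n, 0 < β n)
    (hγ : ∀ n, γ n = Gn n
      (fun k : {i : Fin m // part i = n} => Real.exp (aL k.1 - bU k.1 * c k.1)))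
    (x : Fin m → ℝ) :
    ∃ r : Fin N → ℝ, PhiP m N part Gn c x aL bU ≤ Phit γ β r := by
  haveI : ∀ n : Fin N, Nonempty {i : Fin m // part i = n} :=
    fun n => ⟨⟨(hpart n).choose, (hpart n).choose_spec⟩⟩
  set gval : Fin N → ℝ := fun n => Gn n
    (fun k : {i : Fin m // part i = n} => Real.exp (aL k.1 - bU k.1 * x k.1)) with hgval
  have hgpos : ∀ n, 0 < gval n := fun n =>
    gpos (hGsmooth n) (hGhom n) (hGd1 n) (fun k => Real.exp_pos _)
  have hγpos : ∀ n, 0 < γ n := by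
    intro n
    rw [hγ n]
    exact gpos (hGsmooth n) (hGhom n) (hGd1 n) (fun k => Real.exp_pos _)
  set r : Fin N → ℝ := fun n => (Real.log (γ n) - Real.log (gval n)) / β n with hr
  refine ⟨r, ?_⟩
  -- the exponential identity:  γ n * exp (-β n * r n) = gval n
  have hexp : ∀ n, γ n * Real.exp (-β n * r n) = gval n := by
    intro n
    have hβn := hβpos n
    have : -β n * r n = Real.log (gval n) - Real.log (γ n) := by
      rw [hr]
      field_simp
      ring
    rw [this, Real.exp_sub, Real.exp_log (hgpos n), Real.exp_log (hγpos n)]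
    rw [mul_comm]
    exact div_mul_cancel₀ (gval n) (ne_of_gt (hγpos n))
  -- key per-nest inequality
  have hnest : ∀ n, ∑ k : {i : Fin m // part i = n},
      (x k.1 - c k.1) * (Real.exp (aL k.1 - bU k.1 * x k.1) *
        fderiv ℝ (Gn n)
          (fun j : {i : Fin m // part i = n} => Real.exp (aL j.1 - bU j.1 * x j.1))
          (Pi.single k 1)) ≤ r n * gval n := by
    intro n
    set v : {i : Fin m // part i = n} → ℝ := fun k => aL k.1 - bU k.1 * x k.1 with hv
    set w : {i : Fin m // part i = n} → ℝ :=
      fun k => aL k.1 - bU k.1 * c k.1 - β n * r n with hw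
    have hkey := grad_log_ineq (hGsmooth n) (hGhom n) (hGd1 n) (hGd2 n) v w
    -- identify g (exp∘w)
    have hgw : Gn n (fun j : {i : Fin m // part i = n} => Real.exp (w j)) = gval n := by
      have harg : (fun j : {i : Fin m // part i = n} => Real.exp (w j))
          = (Real.exp (-β n * r n)) •
            (fun j : {i : Fin m // part i = n} => Real.exp (aL j.1 - bU j.1 * c j.1)) := by
        funext j
        simp only [Pi.smul_apply, smul_eq_mul, ← Real.exp_add, hw]
        congr 1
        ring
      rw [harg, hGhom n _ (Real.exp_pos _) _ (fun j => Real.exp_pos _), ← hγ n]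
      rw [mul_comm]
      exact hexp n
    rw [hgw] at hkey
    have hgv : Gn n (fun j : {i : Fin m // part i = n} => Real.exp (v j)) = gval n := rfl
    rw [hgv] at hkey
    simp only [sub_self, mul_zero] at hkey
    -- hkey : ∑ k, (w k - v k) * (exp (v k) * D k) ≤ 0
    have hwv : ∀ k : {i : Fin m // part i = n}, w k - v k
        = β n * (x k.1 - c k.1 - r n) := by
      intro k
      have hbk : β n = bU k.1 := by rw [← hβ k.1, k.2]
      simp only [hw, hv, ← hbk]
      ring
    have hsum : ∑ k : {i : Fin m // part i = n}, (w k - v k) *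
        (Real.exp (v k) * fderiv ℝ (Gn n)
          (fun j : {i : Fin m // part i = n} => Real.exp (v j)) (Pi.single k 1))
        = β n * ((∑ k : {i : Fin m // part i = n},
            (x k.1 - c k.1) * (Real.exp (v k) * fderiv ℝ (Gn n)
              (fun j : {i : Fin m // part i = n} => Real.exp (v j)) (Pi.single k 1)))
          - r n * ∑ k : {i : Fin m // part i = n},
            Real.exp (v k) * fderiv ℝ (Gn n)
              (fun j : {i : Fin m // part i = n} => Real.exp (v j)) (Pi.single k 1)) := by
      have hterm : ∀ k : {i : Fin m // part i = n}, (w k - v k) *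
          (Real.exp (v k) * fderiv ℝ (Gn n)
            (fun j : {i : Fin m // part i = n} => Real.exp (v j)) (Pi.single k 1))
          = β n * ((x k.1 - c k.1) * (Real.exp (v k) * fderiv ℝ (Gn n)
              (fun j : {i : Fin m // part i = n} => Real.exp (v j)) (Pi.single k 1)))
            - β n * (r n * (Real.exp (v k) * fderiv ℝ (Gn n)
              (fun j : {i : Fin m // part i = n} => Real.exp (v j)) (Pi.single k 1))) := by
        intro k
        rw [hwv k]
        ring
      rw [Finset.sum_congr rfl fun k _ => hterm k, Finset.sum_sub_distrib,
        ← Finset.mul_sum, ← Finset.mul_sum, ← Finset.mul_sum]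
      ring
    rw [hsum] at hkey
    have heuler : ∑ k : {i : Fin m // part i = n},
        Real.exp (v k) * fderiv ℝ (Gn n)
          (fun j : {i : Fin m // part i = n} => Real.exp (v j)) (Pi.single k 1)
        = gval n := by
      rw [← euler_sum (hGsmooth n) (hGhom n) (fun j => Real.exp_pos _)]
    rw [heuler] at hkey
    have hβn := hβpos n
    nlinarith [hkey]
  -- assemble
  rw [phi_formula hGsmooth]
  unfold Phit
  have hsum : ∀ n, γ n * Real.exp (-β n * r n) = gval n := hexp
  have hds : (1 + ∑ n, γ n * Real.exp (-β n * r n)) = 1 + ∑ n, gval n := by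
    rw [Finset.sum_congr rfl fun n _ => hsum n]
  rw [hds]
  have hdenpos : (0:ℝ) < 1 + ∑ n, gval n := by
    have : 0 ≤ ∑ n, gval n := Finset.sum_nonneg fun n _ => (hgpos n).le
    linarith
  have hns : (∑ n, r n * (γ n * Real.exp (-β n * r n))) = ∑ n, r n * gval n := by
    refine Finset.sum_congr rfl fun n _ => ?_
    rw [hsum n]
  rw [hns]
  have hnumle : ∑ n, ∑ k : {i : Fin m // part i = n},
      (x k.1 - c k.1) * (Real.exp (aL k.1 - bU k.1 * x k.1) *
        fderiv ℝ (Gn n)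
          (fun j : {i : Fin m // part i = n} => Real.exp (aL j.1 - bU j.1 * x j.1))
          (Pi.single k 1)) ≤ ∑ n, r n * gval n :=
    Finset.sum_le_sum fun n _ => hnest n
  exact (div_le_div_iff_of_pos_right hdenpos).2 hnumle

private lemma phit_raise {N : ℕ} (γ β : Fin N → ℝ) (hγ : ∀ n, 0 < γ n) (hβ : ∀ n, 0 < β n)
    (r : Fin N → ℝ) (T V : ℝ) (hV : V ≤ Phit γ β r) (hT : ∀ n, T < V + 1/β n) :
    V ≤ Phit γ β (fun n => max (r n) T) := by
  have hgen : ∀ s : Finset (Fin N),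
      V ≤ Phit γ β (fun n => if n ∈ s then max (r n) T else r n) := by
    intro s
    induction s using Finset.induction_on with
    | empty => simpa using hV
    | @insert k s hks ih =>
      set rs : Fin N → ℝ := fun n => if n ∈ s then max (r n) T else r n with hrs
      rcases le_or_gt T (r k) with hTr | hrT
      · -- nothing changes
        have heq : (fun n => if n ∈ insert k s then max (r n) T else r n) = rs := by
          funext n
          rcases eq_or_ne n k with rfl | hn
          · simp [hks, max_eq_left hTr, hrs]
          · simp [Finset.mem_insert, hn, hrs]
        rw [heq]
        exact ih
      · -- raise coordinate k from r k to T
        set Δ : ℝ := T - r k with hΔ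
        have hΔpos : 0 < Δ := by simp only [hΔ]; linarith
        set ρp : ℝ → Fin N → ℝ := fun t n => if n = k then r k + t * Δ else rs n with hρp
        set num : ℝ → ℝ := fun t => ∑ n, (ρp t n) * (γ n * Real.exp (-β n * ρp t n))
          with hnum
        set den : ℝ → ℝ := fun t => 1 + ∑ n, γ n * Real.exp (-β n * ρp t n) with hden
        have hdenpos : ∀ t, 0 < den t := by
          intro t
          have : 0 ≤ ∑ n, γ n * Real.exp (-β n * ρp t n) :=
            Finset.sum_nonneg fun n _ => (mul_pos (hγ n) (Real.exp_pos _)).le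
          simp only [hden]
          linarith
        set e : ℝ → ℝ := fun t => γ k * Real.exp (-β k * (r k + t * Δ)) with he
        have hepos : ∀ t, 0 < e t := fun t => mul_pos (hγ k) (Real.exp_pos _)
        have hcoordd : ∀ t, HasDerivAt (fun u : ℝ => r k + u * Δ) Δ t := by
          intro t
          simpa using ((hasDerivAt_id t).mul_const Δ).const_add (r k)
        have hed : ∀ t, HasDerivAt e (-(β k * Δ) * e t) t := by
          intro t
          have h2 : HasDerivAt (fun u : ℝ => -β k * (r k + u * Δ)) (-β k * Δ) t :=
            (hcoordd t).const_mul (-β k)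
          have h3 := h2.exp
          have h4 := h3.const_mul (γ k)
          simp only [he]
          exact h4.congr_deriv (by ring)
        have hnum' : ∀ t, HasDerivAt num
            (Δ * e t * (1 - β k * (r k + t * Δ))) t := by
          intro t
          have hper : ∀ n ∈ Finset.univ, HasDerivAt
              (fun u => (ρp u n) * (γ n * Real.exp (-β n * ρp u n)))
              (if n = k then Δ * e t * (1 - β k * (r k + t * Δ)) else 0) t := by
            intro n _
            rcases eq_or_ne n k with hn | hn
            · have hfun : (fun u => (ρp u n) * (γ n * Real.exp (-β n * ρp u n)))
                  = fun u => (r k + u * Δ) * (γ k * Real.exp (-β k * (r k + u * Δ))) := by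
                funext u
                rw [hn]
                simp only [hρp, eq_self_iff_true, if_true]
              rw [hfun, if_pos hn]
              have h6 : HasDerivAt (fun u => (r k + u * Δ) * e u)
                  (Δ * e t + (r k + t * Δ) * (-(β k * Δ) * e t)) t :=
                (hcoordd t).mul (hed t)
              have h7 : HasDerivAt (fun u => (r k + u * Δ) *
                  (γ k * Real.exp (-β k * (r k + u * Δ))))
                  (Δ * e t + (r k + t * Δ) * (-(β k * Δ) * e t)) t := h6
              convert h7 using 1
              simp only [he]
              ring
            · have hfun : (fun u => (ρp u n) * (γ n * Real.exp (-β n * ρp u n)))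
                  = fun _ => (rs n) * (γ n * Real.exp (-β n * rs n)) := by
                funext u
                simp only [hρp, if_neg hn]
              rw [hfun, if_neg hn]
              exact hasDerivAt_const t _
          have h := HasDerivAt.fun_sum (u := Finset.univ)
            (A := fun n u => (ρp u n) * (γ n * Real.exp (-β n * ρp u n)))
            (A' := fun n => if n = k then Δ * e t * (1 - β k * (r k + t * Δ)) else 0)
            hper
          have hsum0 : (∑ n, if n = k then Δ * e t * (1 - β k * (r k + t * Δ)) else 0)
              = Δ * e t * (1 - β k * (r k + t * Δ)) := by
            rw [Finset.sum_ite_eq' Finset.univ k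
              (fun _ => Δ * e t * (1 - β k * (r k + t * Δ)))]
            simp
          rw [hsum0] at h
          rw [hnum]
          exact h
        have hden' : ∀ t, HasDerivAt den (-(β k * Δ) * e t) t := by
          intro t
          have hper : ∀ n ∈ Finset.univ, HasDerivAt
              (fun u => γ n * Real.exp (-β n * ρp u n))
              (if n = k then -(β k * Δ) * e t else 0) t := by
            intro n _
            rcases eq_or_ne n k with hn | hn
            · have hfun : (fun u => γ n * Real.exp (-β n * ρp u n))
                  = fun u => γ k * Real.exp (-β k * (r k + u * Δ)) := by
                funext u
                rw [hn]
                simp only [hρp, eq_self_iff_true, if_true]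
              rw [hfun, if_pos hn]
              exact hed t
            · have hfun : (fun u => γ n * Real.exp (-β n * ρp u n))
                  = fun _ => γ n * Real.exp (-β n * rs n) := by
                funext u
                simp only [hρp, if_neg hn]
              rw [hfun, if_neg hn]
              exact hasDerivAt_const t _
          have h := HasDerivAt.fun_sum (u := Finset.univ)
            (A := fun n u => γ n * Real.exp (-β n * ρp u n))
            (A' := fun n => if n = k then -(β k * Δ) * e t else 0) hper
          have hsum0 : (∑ n, if n = k then -(β k * Δ) * e t else 0)
              = -(β k * Δ) * e t := by
            rw [Finset.sum_ite_eq' Finset.univ k (fun _ => -(β k * Δ) * e t)]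
            simp
          rw [hsum0] at h
          rw [hden]
          exact h.const_add 1
        set ψ : ℝ → ℝ := fun t => num t / den t with hψ
        have hψ' : ∀ t, HasDerivAt ψ
            ((Δ * e t * (1 - β k * (r k + t * Δ)) * den t
              - num t * (-(β k * Δ) * e t)) / den t ^ 2) t := by
          intro t
          rw [hψ]
          exact (hnum' t).div (hden' t) (ne_of_gt (hdenpos t))
        have hψ0 : ψ 0 = Phit γ β rs := by
          have : ρp 0 = rs := by
            funext n
            rcases eq_or_ne n k with rfl | hn
            · simp [hρp, hrs, hks]
            · simp [hρp, hn]
          simp only [hψ, hnum, hden, this]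
          unfold Phit
          rfl
        have hψ1 : ψ 1 = Phit γ β
            (fun n => if n ∈ insert k s then max (r n) T else r n) := by
          have : ρp 1 = fun n => if n ∈ insert k s then max (r n) T else r n := by
            funext n
            rcases eq_or_ne n k with rfl | hn
            · simp only [hρp, if_pos rfl, Finset.mem_insert]
              simp [max_eq_right hrT.le, hΔ]
            · simp [hρp, hn, Finset.mem_insert, hrs]
          simp only [hψ, hnum, hden, this]
          unfold Phit
          rfl
        have hM0 : T - 1/β k < ψ 0 := by
          rw [hψ0]
          have := hT k
          linarith [ih]
        have hcond : ∀ t ∈ Set.Icc (0:ℝ) 1, T - 1/β k < ψ t →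
            0 ≤ (Δ * e t * (1 - β k * (r k + t * Δ)) * den t
              - num t * (-(β k * Δ) * e t)) / den t ^ 2 := by
          intro t ht hψt
          apply div_nonneg _ (sq_nonneg _)
          have hρk : r k + t * Δ ≤ T := by
            have h1 : t * Δ ≤ Δ := by
              have := ht.2
              nlinarith [hΔpos]
            simp only [hΔ] at h1 ⊢
            linarith
          have hnumgt : (T - 1/β k) * den t < num t := by
            simp only [hψ] at hψt
            exact (lt_div_iff₀ (hdenpos t)).1 hψt
          have hβinv : β k * (1/β k) = 1 := mul_one_div_cancel (ne_of_gt (hβ k))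
          have hA : 0 ≤ (1 - β k * (r k + t * Δ)) * den t + β k * num t := by
            have h8 : β k * ((T - 1/β k) * den t) < β k * num t :=
              mul_lt_mul_of_pos_left hnumgt (hβ k)
            have h9 : (1 - β k * (r k + t * Δ)) * den t + β k * ((T - 1/β k) * den t)
                = (β k * (T - (r k + t * Δ))) * den t := by
              linear_combination (-(den t)) * hβinv
            have h10 : 0 ≤ (β k * (T - (r k + t * Δ))) * den t :=
              mul_nonneg (mul_nonneg (hβ k).le (by linarith)) (hdenpos t).le
            have h11 : (1 - β k * (r k + t * Δ)) * den t + β k * num t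
                = (β k * (T - (r k + t * Δ))) * den t
                  + (β k * num t - β k * ((T - 1/β k) * den t)) := by
              linear_combination h9
            rw [h11]
            exact add_nonneg h10 (sub_nonneg.2 h8.le)
          have hrw : Δ * e t * (1 - β k * (r k + t * Δ)) * den t
              - num t * (-(β k * Δ) * e t)
              = Δ * e t * ((1 - β k * (r k + t * Δ)) * den t + β k * num t) := by
            ring
          rw [hrw]
          exact mul_nonneg (mul_nonneg hΔpos.le (hepos t).le) hA
        have := mono_of_cond_deriv_above ψ _ hψ' (T - 1/β k) hM0 hcond
        rw [hψ0, hψ1] at this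
        exact le_trans ih this
  have h := hgen Finset.univ
  simpa using h

end Assembly

/-- Under a rectangular uncertainty set (with partition-wise
constant price-sensitivity parameters), the robust pricing problem equals the
deterministic one with parameters `(a_low, b_high)`. -/
theorem stmt_16
    (m N : ℕ) (hN : 1 ≤ N)
    (part : Fin m → Fin N) (hpart : ∀ n : Fin N, ∃ i, part i = n)
    (Gn : ∀ n : Fin N, ({i : Fin m // part i = n} → ℝ) → ℝ)
    (hGnonneg : ∀ n, ∀ Y : {i : Fin m // part i = n} → ℝ,
      (∀ i, 0 < Y i) → 0 ≤ Gn n Y)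
    (hGsmooth : ∀ n, ContDiffOn ℝ 2 (Gn n)
      {Y : {i : Fin m // part i = n} → ℝ | ∀ i, 0 < Y i})
    (hGhom : ∀ n, ∀ lam : ℝ, 0 < lam → ∀ Y : {i : Fin m // part i = n} → ℝ,
      (∀ i, 0 < Y i) → Gn n (lam • Y) = lam * Gn n Y)
    (hGd1 : ∀ n, ∀ Y : {i : Fin m // part i = n} → ℝ, (∀ i, 0 < Y i) →
      ∀ i, 0 < fderiv ℝ (Gn n) Y (Pi.single i 1))
    (hGd2 : ∀ n, ∀ Y : {i : Fin m // part i = n} → ℝ, (∀ i, 0 < Y i) →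
      ∀ i j, i ≠ j →
        fderiv ℝ (fun W => fderiv ℝ (Gn n) W (Pi.single i 1)) Y (Pi.single j 1) ≤ 0)
    (c : Fin m → ℝ) (hc : ∀ i, 0 ≤ c i)
    (aLow aHigh bLow bHigh : Fin m → ℝ)
    (haLH : ∀ i, aLow i ≤ aHigh i)
    (hbLpos : ∀ i, 0 < bLow i) (hbLH : ∀ i, bLow i ≤ bHigh i)
    (hbLconst : ∀ i j : Fin m, part i = part j → bLow i = bLow j)
    (hbHconst : ∀ i j : Fin m, part i = part j → bHigh i = bHigh j)
    (A : Set ((Fin m → ℝ) × (Fin m → ℝ)))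
    (hA : A = {ab : (Fin m → ℝ) × (Fin m → ℝ) |
      (∀ i, aLow i ≤ ab.1 i) ∧ (∀ i, ab.1 i ≤ aHigh i) ∧
      (∀ i, bLow i ≤ ab.2 i) ∧ (∀ i, ab.2 i ≤ bHigh i) ∧
      (∀ i j : Fin m, part i = part j → ab.2 i = ab.2 j)}) :
    (⨆ x : Fin m → ℝ,
        sInf ((fun ab => PhiP m N part Gn c x ab.1 ab.2) '' A)) =
      ⨆ x : Fin m → ℝ, PhiP m N part Gn c x aLow bHigh := by
  haveI hNinst : Nonempty (Fin N) := ⟨⟨0, hN⟩⟩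
  haveI hfib : ∀ n : Fin N, Nonempty {i : Fin m // part i = n} :=
    fun n => ⟨⟨(hpart n).choose, (hpart n).choose_spec⟩⟩
  have hNne : (Finset.univ : Finset (Fin N)).Nonempty := Finset.univ_nonempty
  set β : Fin N → ℝ := fun n => bHigh (hpart n).choose with hβdef
  have hβconst : ∀ i, β (part i) = bHigh i := fun i =>
    hbHconst (hpart (part i)).choose i (hpart (part i)).choose_spec
  have hβpos : ∀ n, 0 < β n := fun n =>
    lt_of_lt_of_le (hbLpos _) (hbLH _)
  set γ : Fin N → ℝ := fun n => Gn n
    (fun k : {i : Fin m // part i = n} => Real.exp (aLow k.1 - bHigh k.1 * c k.1))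
    with hγdef
  have hγpos : ∀ n, 0 < γ n := fun n =>
    gpos (hGsmooth n) (hGhom n) (hGd1 n) (fun k => Real.exp_pos _)
  have hALBH : (aLow, bHigh) ∈ A := by
    rw [hA]
    exact ⟨fun i => le_refl _, haLH, hbLH, fun i => le_refl _, hbHconst⟩
  have himg_ne : ∀ x : Fin m → ℝ, ((fun ab : (Fin m → ℝ) × (Fin m → ℝ) =>
      PhiP m N part Gn c x ab.1 ab.2) '' A).Nonempty :=
    fun x => ⟨_, ⟨(aLow, bHigh), hALBH, rfl⟩⟩
  have hbdd : ∀ x : Fin m → ℝ, BddBelow ((fun ab : (Fin m → ℝ) × (Fin m → ℝ) =>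
      PhiP m N part Gn c x ab.1 ab.2) '' A) := by
    intro x
    refine ⟨-(∑ i, |x i - c i|), ?_⟩
    rintro z ⟨ab, hab, rfl⟩
    exact phi_lower hpart hGsmooth hGhom hGd1 c x ab.1 ab.2
  refine iSup_eq_iSup_of (fun x => ?_) (fun x0 => ?_)
  · exact csInf_le (hbdd x) ⟨(aLow, bHigh), hALBH, rfl⟩
  · set V := PhiP m N part Gn c x0 aLow bHigh with hVdef
    rcases le_or_gt V 0 with hV0 | hV0
    · refine ⟨fun i => c i + 1, ?_⟩
      refine le_trans hV0 (le_csInf (himg_ne _) ?_)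
      rintro z ⟨ab, hab, rfl⟩
      exact phi_markup_nonneg hpart hGsmooth hGhom hGd1 c ab.1 ab.2 (fun _ => 1)
        (fun n => zero_le_one) _ (fun i => rfl)
    · obtain ⟨r, hr⟩ := phi_exchange hpart hGsmooth hGhom hGd1 hGd2 c aLow bHigh
        β γ hβconst hβpos (fun n => rfl) x0
      have hinfpos : 0 < Finset.univ.inf' hNne (fun n => 1/β n) := by
        rw [Finset.lt_inf'_iff]
        exact fun n _ => one_div_pos.2 (hβpos n)
      set δ : ℝ := (Finset.univ.inf' hNne fun n => 1/β n) / 2 with hδdef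
      have hδpos : 0 < δ := half_pos hinfpos
      have hδlt : ∀ n, δ < 1/β n := by
        intro n
        have h1 : Finset.univ.inf' hNne (fun n => 1/β n) ≤ 1/β n :=
          Finset.inf'_le _ (Finset.mem_univ n)
        have h2 : δ < Finset.univ.inf' hNne (fun n => 1/β n) := by
          simp only [hδdef]
          linarith
        linarith
      set T : ℝ := V + δ with hTdef
      have hT : ∀ n, T < V + 1/β n := fun n => by
        simp only [hTdef]
        linarith [hδlt n]
      have hraise := phit_raise γ β hγpos hβpos r T V hr hT
      set r' : Fin N → ℝ := fun n => max (r n) T with hr'def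
      have hr'T : ∀ n, T ≤ r' n := fun n => le_max_right _ _
      have hTpos : 0 < T := by
        simp only [hTdef]
        linarith
      refine ⟨fun i => c i + r' (part i), ?_⟩
      apply le_csInf (himg_ne _)
      rintro z ⟨ab, hab, rfl⟩
      rw [hA] at hab
      obtain ⟨ha1, _, _, hb2, _⟩ := hab
      have hxpos : ∀ i, 0 ≤ c i + r' (part i) := fun i =>
        add_nonneg (hc i) (le_trans hTpos.le (hr'T _))
      have hpath := phi_path hpart hGsmooth hGhom hGd1 hNne c aLow bHigh ab.1 ab.2
        ha1 hb2 r' _ (fun i => rfl) hxpos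
      have heq := phit_eq hGsmooth hGhom c aLow bHigh β γ hβconst (fun n => rfl) r'
      rw [heq] at hpath
      have h1 : V ≤ Phit γ β r' := hraise
      have h2 : V ≤ Finset.univ.inf' hNne r' := by
        apply Finset.le_inf'
        intro n _
        exact le_trans (by linarith : V ≤ T) (hr'T n)
      exact le_trans (le_min h1 h2) hpath
end

section
/- Let ε > 0 and λ¹, λ² ∈ ℝ^T with λ¹_t = λ²_t + ε for every t. If p¹ maximizes R_{λ¹} over S and p² maximizes R_{λ²} over S, then Σ_{t=1}^T max(0, g_t(p¹)) ≤ Σ_{t=1}^T max(0, g_t(p²)). -/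
/-! Raising every penalty by `ε` subtracts `ε` times the total violation from the penalized
objective. Comparing the two optimality conditions at each other's maximizer, the objective
terms cancel and leave `ε · (violation p¹ − violation p²) ≤ 0`. -/

theorem le_of_forall_sub_mul_le_of_lt {S : Type*} {f h : S → ℝ} {a b : ℝ} (hab : a < b)
    {p1 p2 : S} (hp1 : ∀ p, f p - b * h p ≤ f p1 - b * h p1)
    (hp2 : ∀ p, f p - a * h p ≤ f p2 - a * h p2) :
    h p1 ≤ h p2 := by
  have hmul : (b - a) * h p1 ≤ (b - a) * h p2 := by linarith [hp1 p2, hp2 p1]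
  exact le_of_mul_le_mul_left hmul (sub_pos.mpr hab)

theorem stmt_17_general
    (S : Type*) (T : ℕ)
    (R : S → ℝ) (g : Fin T → S → ℝ)
    (ε : ℝ) (hε : 0 < ε)
    (lam1 lam2 : Fin T → ℝ) (hlam : ∀ t, lam1 t = lam2 t + ε)
    (p1 p2 : S)
    (hp1 : ∀ p : S, R p - ∑ t, lam1 t * max 0 (g t p) ≤
      R p1 - ∑ t, lam1 t * max 0 (g t p1))
    (hp2 : ∀ p : S, R p - ∑ t, lam2 t * max 0 (g t p) ≤
      R p2 - ∑ t, lam2 t * max 0 (g t p2)) :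
    (∑ t, max 0 (g t p1)) ≤ ∑ t, max 0 (g t p2) := by
  set f : S → ℝ := fun p ↦ R p - ∑ t, lam2 t * max 0 (g t p)
  have hsplit : ∀ p, R p - ∑ t, lam1 t * max 0 (g t p) =
      f p - ε * ∑ t, max 0 (g t p) := by
    intro p
    simp only [f, hlam, add_mul, Finset.sum_add_distrib, ← Finset.mul_sum]
    ring
  refine le_of_forall_sub_mul_le_of_lt (f := f) (h := fun p ↦ ∑ t, max 0 (g t p)) (a := 0) hε
    (fun p ↦ ?_) (fun p ↦ ?_)
  · rw [← hsplit, ← hsplit]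
    exact hp1 p
  · simpa only [zero_mul, sub_zero] using hp2 p

/-- Increasing all penalty parameters by `ε > 0` does not increase
the total constraint violation of a maximizer of the penalized objective
`R_λ(p) = R(p) − Σ_t λ_t max(0, g_t(p))`. -/
theorem stmt_17
    (S : Type*) [Nonempty S] (T : ℕ)
    (R : S → ℝ) (g : Fin T → S → ℝ)
    (ε : ℝ) (hε : 0 < ε)
    (lam1 lam2 : Fin T → ℝ) (hlam : ∀ t, lam1 t = lam2 t + ε)
    (p1 p2 : S)
    (hp1 : ∀ p : S, R p - ∑ t, lam1 t * max 0 (g t p) ≤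
      R p1 - ∑ t, lam1 t * max 0 (g t p1))
    (hp2 : ∀ p : S, R p - ∑ t, lam2 t * max 0 (g t p) ≤
      R p2 - ∑ t, lam2 t * max 0 (g t p2)) :
    (∑ t, max 0 (g t p1)) ≤ ∑ t, max 0 (g t p2) :=
  stmt_17_general S T R g ε hε lam1 lam2 hlam p1 p2 hp1 hp2
end

section
/- Let T ≥ 1, λ ∈ ℝ^T with λ_t ≥ 0 for all t, d^1,…,d^T ∈ ℝ^N, and r ∈ ℝ^T. Then the penalized reduced objective F(p) = Σ_{n=1}^N p_n·z(p)_n − Σ_{t=1}^T λ_t·max(0, (d^t)ᵀp − r_t) is strictly concave on P^G. -/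
/-- `G^n(Y^n | z, a^n, b^n) = G^n((exp(a_i − b_i (z + c_i)))_{i ∈ V_n})` where the
partition `V_n = {i | part i = n}`. -/
noncomputable def GzP (m N : ℕ) (part : Fin m → Fin N)
    (Gn : ∀ n : Fin N, ({i : Fin m // part i = n} → ℝ) → ℝ)
    (c : Fin m → ℝ) (n : Fin N) (z : ℝ)
    (ab : ({i : Fin m // part i = n} → ℝ) × ({i : Fin m // part i = n} → ℝ)) : ℝ :=
  Gn n fun i => Real.exp (ab.1 i - ab.2 i * (z + c i.1))

/-- `ĝ_n(z) = min_{(a^n, b^n) ∈ A^n} G^n(Y^n | z, a^n, b^n)`. -/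
noncomputable def ghatP (m N : ℕ) (part : Fin m → Fin N)
    (Gn : ∀ n : Fin N, ({i : Fin m // part i = n} → ℝ) → ℝ)
    (c : Fin m → ℝ)
    (An : ∀ n : Fin N,
      Set (({i : Fin m // part i = n} → ℝ) × ({i : Fin m // part i = n} → ℝ)))
    (n : Fin N) (z : ℝ) : ℝ :=
  sInf (GzP m N part Gn c n z '' An n)

/-!
By homogeneity of `G^n` and the common price sensitivity `β` of each `(a, b) ∈ A^n`,
`z ↦ G^n(Y^n | z, a, b)` is an exponential `K e^{-β z}`, so `ĝ_n` is a minimum of such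
exponentials, attained by compactness. Inverting, with `x = p_n / (1 - ∑ p)`, the term
`p_n z(p)_n` is the minimum over `(β, K)` of `(1 - ∑ p) · x (log K - log x) / β`: a perspective of
a strictly concave function of `x`. Sums of such perspectives are strictly concave on the open
simplex because `p ↦ p / (1 - ∑ p)` is injective, and a function touched from above at every point
by a strictly concave majorant is itself strictly concave. The penalty is convex.
-/

section OpenSimplex

open Finset Set

variable {ι : Type*} [Fintype ι]

def openSimplex (ι : Type*) [Fintype ι] : Set (ι → ℝ) :=
  {p | (∀ i, 0 < p i) ∧ ∑ i, p i < 1}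

lemma one_sub_sum_pos {p : ι → ℝ} (hp : p ∈ openSimplex ι) : 0 < 1 - ∑ i, p i :=
  sub_pos.2 hp.2

lemma one_sub_sum_convexComb (p q : ι → ℝ) {a b : ℝ} (hab : a + b = 1) :
    1 - ∑ i, (a • p + b • q) i = a * (1 - ∑ i, p i) + b * (1 - ∑ i, q i) := by
  simp only [Pi.add_apply, Pi.smul_apply, smul_eq_mul, sum_add_distrib, ← mul_sum]
  linear_combination -hab

lemma convex_openSimplex : Convex ℝ (openSimplex ι) := by
  intro p hp q hq a b ha hb hab
  refine ⟨fun i => convex_Ioi (0 : ℝ) (hp.1 i) (hq.1 i) ha hb hab, ?_⟩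
  rw [← sub_pos, one_sub_sum_convexComb p q hab]
  exact convex_Ioi (0 : ℝ) (one_sub_sum_pos hp) (one_sub_sum_pos hq) ha hb hab

/-- `p` is recovered from `p / (1 - ∑ p)`, whose sum is `1 / (1 - ∑ p) - 1`. -/
lemma eq_of_div_one_sub_sum_eq {p q : ι → ℝ} (hp : p ∈ openSimplex ι) (hq : q ∈ openSimplex ι)
    (h : ∀ i, p i / (1 - ∑ j, p j) = q i / (1 - ∑ j, q j)) : p = q := by
  have hsp := one_sub_sum_pos hp
  have hsq := one_sub_sum_pos hq
  have hcross : ∀ i, p i * (1 - ∑ j, q j) = q i * (1 - ∑ j, p j) := fun i =>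
    (div_eq_div_iff hsp.ne' hsq.ne').1 (h i)
  have hsum : (∑ j, p j) * (1 - ∑ j, q j) = (∑ j, q j) * (1 - ∑ j, p j) := by
    simp only [sum_mul, hcross]
  have hs : ∑ j, p j = ∑ j, q j := by linarith
  funext i
  have := hcross i
  rw [hs] at this
  exact mul_right_cancel₀ hsq.ne' this

end OpenSimplex

section Perspective

open Finset Set

variable {φ : ℝ → ℝ} {x y u v a b : ℝ}

lemma perspective_convexComb (hu : 0 < u) (hv : 0 < v) (ht : 0 < a * u + b * v) :
    (a * x + b * y) / (a * u + b * v) =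
        (a * u / (a * u + b * v)) • (x / u) + (b * v / (a * u + b * v)) • (y / v) ∧
      a * (u * φ (x / u)) + b * (v * φ (y / v)) =
        (a * u + b * v) * ((a * u / (a * u + b * v)) • φ (x / u) +
          (b * v / (a * u + b * v)) • φ (y / v)) ∧
      a * u / (a * u + b * v) + b * v / (a * u + b * v) = 1 := by
  simp only [smul_eq_mul]
  refine ⟨?_, ?_, ?_⟩ <;> field_simp

lemma ConcaveOn.perspective_le (hφ : ConcaveOn ℝ (Ioi 0) φ) (hx : 0 < x) (hy : 0 < y)
    (hu : 0 < u) (hv : 0 < v) (ha : 0 ≤ a) (hb : 0 ≤ b) (hab : a + b = 1) :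
    a * (u * φ (x / u)) + b * (v * φ (y / v)) ≤
      (a * u + b * v) * φ ((a * x + b * y) / (a * u + b * v)) := by
  have ht : 0 < a * u + b * v := convex_Ioi (0 : ℝ) hu hv ha hb hab
  obtain ⟨hpt, hval, hw⟩ := perspective_convexComb (φ := φ) (x := x) (y := y) hu hv ht
  rw [hval, hpt]
  gcongr
  exact hφ.2 (div_pos hx hu) (div_pos hy hv) (by positivity) (by positivity) hw

lemma StrictConcaveOn.perspective_lt (hφ : StrictConcaveOn ℝ (Ioi 0) φ) (hx : 0 < x)
    (hy : 0 < y) (hu : 0 < u) (hv : 0 < v) (ha : 0 < a) (hb : 0 < b) (hab : a + b = 1)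
    (hne : x / u ≠ y / v) :
    a * (u * φ (x / u)) + b * (v * φ (y / v)) <
      (a * u + b * v) * φ ((a * x + b * y) / (a * u + b * v)) := by
  have ht : 0 < a * u + b * v := convex_Ioi (0 : ℝ) hu hv ha.le hb.le hab
  obtain ⟨hpt, hval, hw⟩ := perspective_convexComb (φ := φ) (x := x) (y := y) hu hv ht
  rw [hval, hpt]
  gcongr
  exact hφ.2 (div_pos hx hu) (div_pos hy hv) hne (by positivity) (by positivity) hw

variable {ι : Type*} [Fintype ι]

lemma strictConcaveOn_sum_perspective {φ : ι → ℝ → ℝ}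
    (hφ : ∀ i, StrictConcaveOn ℝ (Ioi 0) (φ i)) :
    StrictConcaveOn ℝ (openSimplex ι)
      (fun p => ∑ i, (1 - ∑ j, p j) * φ i (p i / (1 - ∑ j, p j))) := by
  refine ⟨convex_openSimplex, fun p hp q hq hpq a b ha hb hab => ?_⟩
  obtain ⟨i₀, hi₀⟩ : ∃ i, p i / (1 - ∑ j, p j) ≠ q i / (1 - ∑ j, q j) := by
    by_contra! h
    exact hpq (eq_of_div_one_sub_sum_eq hp hq h)
  simp only [one_sub_sum_convexComb p q hab]
  simp only [Pi.add_apply, Pi.smul_apply, smul_eq_mul, mul_sum, ← sum_add_distrib]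
  have hsp := one_sub_sum_pos hp
  have hsq := one_sub_sum_pos hq
  refine sum_lt_sum (fun i _ => ?_) ⟨i₀, mem_univ _, ?_⟩
  · exact (hφ i).concaveOn.perspective_le (hp.1 i) (hq.1 i) hsp hsq ha.le hb.le hab
  · exact (hφ i₀).perspective_lt (hp.1 i₀) (hq.1 i₀) hsp hsq ha hb hab hi₀

end Perspective

section Majorant

variable {E : Type*} [AddCommGroup E] [Module ℝ E] {s : Set E} {f : E → ℝ}

lemma strictConcaveOn_of_forall_majorant (hs : Convex ℝ s)
    (h : ∀ w ∈ s, ∃ g : E → ℝ, StrictConcaveOn ℝ s g ∧ (∀ p ∈ s, f p ≤ g p) ∧ f w = g w) :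
    StrictConcaveOn ℝ s f := by
  refine ⟨hs, fun p hp q hq hpq a b ha hb hab => ?_⟩
  obtain ⟨g, hg, hle, heq⟩ := h _ (hs hp hq ha.le hb.le hab)
  calc a • f p + b • f q ≤ a • g p + b • g q := by
        gcongr
        exacts [hle p hp, hle q hq]
    _ < g (a • p + b • q) := hg.2 hp hq hpq ha hb hab
    _ = f (a • p + b • q) := heq.symm

end Majorant

section Penalty

open Finset

variable {ι τ : Type*} [Fintype ι] [Fintype τ]

lemma convexOn_sum_mul_max_zero {s : Set (ι → ℝ)} (hs : Convex ℝ s) {lam : τ → ℝ}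
    (hlam : ∀ t, 0 ≤ lam t) (d : τ → ι → ℝ) (r : τ → ℝ) :
    ConvexOn ℝ s (fun p => ∑ t, lam t * max 0 (∑ i, d t i * p i - r t)) := by
  refine ⟨hs, fun p _ q _ a b ha hb hab => ?_⟩
  simp only [smul_eq_mul, mul_sum, ← sum_add_distrib]
  refine sum_le_sum fun t _ => ?_
  have haffine : ∑ i, d t i * (a • p + b • q) i - r t =
      a * (∑ i, d t i * p i - r t) + b * (∑ i, d t i * q i - r t) := by
    simp only [Pi.add_apply, Pi.smul_apply, smul_eq_mul, mul_add, sum_add_distrib,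
      mul_left_comm _ a, mul_left_comm _ b, ← mul_sum]
    linear_combination (r t) * hab
  have hmax : ∀ X Y : ℝ, max 0 (a * X + b * Y) ≤ a * max 0 X + b * max 0 Y := fun X Y =>
    max_le (add_nonneg (mul_nonneg ha (le_max_left _ _)) (mul_nonneg hb (le_max_left _ _)))
      (add_le_add (mul_le_mul_of_nonneg_left (le_max_right _ _) ha)
        (mul_le_mul_of_nonneg_left (le_max_right _ _) hb))
  rw [haffine]
  linear_combination mul_le_mul_of_nonneg_left
    (hmax (∑ i, d t i * p i - r t) (∑ i, d t i * q i - r t)) (hlam t)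

end Penalty

section ExpDecay

open Real Set

/-- The inverse of the decaying exponential `z ↦ K e^{-β z}`. -/
noncomputable def expDecayInv (β K x : ℝ) : ℝ :=
  (log K - log x) / β

variable {β K x z : ℝ}

lemma le_expDecayInv (hβ : 0 < β) (hx : 0 < x) (h : x ≤ exp (-(β * z)) * K) :
    z ≤ expDecayInv β K x := by
  have hK : 0 < K := pos_of_mul_pos_right (hx.trans_le h) (exp_pos _).le
  have hlog := log_le_log hx h
  rw [log_mul (exp_pos _).ne' hK.ne', log_exp] at hlog
  rw [expDecayInv, le_div_iff₀ hβ]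
  linarith

lemma expDecayInv_eq (hβ : 0 < β) (hx : 0 < x) (h : x = exp (-(β * z)) * K) :
    expDecayInv β K x = z := by
  have hK : 0 < K := pos_of_mul_pos_right (h ▸ hx) (exp_pos _).le
  rw [expDecayInv, h, log_mul (exp_pos _).ne' hK.ne', log_exp, div_eq_iff hβ.ne']
  ring

/-- `x ↦ x (log K - log x) / β` is a positive multiple of `negMulLog` plus a linear term. -/
lemma strictConcaveOn_mul_expDecayInv (hβ : 0 < β) (K : ℝ) :
    StrictConcaveOn ℝ (Ioi 0) (fun x => x * expDecayInv β K x) := by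
  refine ⟨convex_Ioi 0, fun x hx y hy hxy a b ha hb hab => ?_⟩
  have h := strictConcaveOn_negMulLog.2 (mem_Ici.2 (le_of_lt hx)) (mem_Ici.2 (le_of_lt hy))
    hxy ha hb hab
  simp only [smul_eq_mul, negMulLog, expDecayInv, div_eq_mul_inv] at h ⊢
  linear_combination mul_lt_mul_of_pos_left h (inv_pos.2 hβ)

section Ghat

open Real Set

variable {m N : ℕ} {part : Fin m → Fin N} {Gn : ∀ n : Fin N, ({i : Fin m // part i = n} → ℝ) → ℝ}
  {c : Fin m → ℝ} {n : Fin N}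
  {An : ∀ n : Fin N, Set (({i : Fin m // part i = n} → ℝ) × ({i : Fin m // part i = n} → ℝ))}

lemma continuous_GzP (hG : ContinuousOn (Gn n) {Y | ∀ i, 0 < Y i}) (z : ℝ) :
    Continuous (GzP m N part Gn c n z) :=
  hG.comp_continuous (by fun_prop) fun _ _ => exp_pos _

lemma GzP_eq_exp_mul
    (hGhom : ∀ lam : ℝ, 0 < lam → ∀ Y : {i : Fin m // part i = n} → ℝ,
      (∀ i, 0 < Y i) → Gn n (lam • Y) = lam * Gn n Y)
    {ab : ({i : Fin m // part i = n} → ℝ) × ({i : Fin m // part i = n} → ℝ)} {β : ℝ}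
    (hβ : ∀ i, ab.2 i = β) (z : ℝ) :
    GzP m N part Gn c n z ab = exp (-(β * z)) * GzP m N part Gn c n 0 ab := by
  have hY : (fun i => exp (ab.1 i - ab.2 i * (z + c i.1))) =
      exp (-(β * z)) • fun i => exp (ab.1 i - ab.2 i * (0 + c i.1)) := by
    funext i
    simp only [Pi.smul_apply, smul_eq_mul, hβ, ← exp_add]
    ring_nf
  exact (congrArg (Gn n) hY).trans (hGhom _ (exp_pos _) _ fun _ => exp_pos _)

lemma ghatP_le_GzP (hG : ContinuousOn (Gn n) {Y | ∀ i, 0 < Y i}) (hA : IsCompact (An n))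
    {ab} (hab : ab ∈ An n) (z : ℝ) : ghatP m N part Gn c An n z ≤ GzP m N part Gn c n z ab :=
  csInf_le (hA.bddBelow_image (continuous_GzP hG z).continuousOn) (mem_image_of_mem _ hab)

lemma exists_ghatP_eq_GzP (hG : ContinuousOn (Gn n) {Y | ∀ i, 0 < Y i})
    (hA : IsCompact (An n)) (hAne : (An n).Nonempty) (z : ℝ) :
    ∃ ab ∈ An n, GzP m N part Gn c n z ab = ghatP m N part Gn c An n z :=
  (hA.image (continuous_GzP hG z)).sInf_mem (hAne.image _)

lemma exists_exp_touching_ghatP (hG : ContinuousOn (Gn n) {Y | ∀ i, 0 < Y i})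
    (hGhom : ∀ lam : ℝ, 0 < lam → ∀ Y : {i : Fin m // part i = n} → ℝ,
      (∀ i, 0 < Y i) → Gn n (lam • Y) = lam * Gn n Y)
    (hA : IsCompact (An n)) (hAne : (An n).Nonempty)
    (hAb : ∀ ab ∈ An n, ∃ β : ℝ, 0 < β ∧ ∀ i, ab.2 i = β) (z₀ : ℝ) :
    ∃ β K : ℝ, 0 < β ∧ ghatP m N part Gn c An n z₀ = exp (-(β * z₀)) * K ∧
      ∀ z, ghatP m N part Gn c An n z ≤ exp (-(β * z)) * K := by
  obtain ⟨ab, hab, hmin⟩ := exists_ghatP_eq_GzP hG hA hAne z₀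
  obtain ⟨β, hβ, hβi⟩ := hAb ab hab
  refine ⟨β, GzP m N part Gn c n 0 ab, hβ, ?_, fun z => ?_⟩
  · rw [← hmin, GzP_eq_exp_mul hGhom hβi]
  · rw [← GzP_eq_exp_mul hGhom hβi]
    exact ghatP_le_GzP hG hA hab z

end Ghat

theorem stmt_19_general
    (m N : ℕ)
    (part : Fin m → Fin N)
    (Gn : ∀ n : Fin N, ({i : Fin m // part i = n} → ℝ) → ℝ)
    (hGsmooth : ∀ n, ContDiffOn ℝ 2 (Gn n)
      {Y : {i : Fin m // part i = n} → ℝ | ∀ i, 0 < Y i})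
    (hGhom : ∀ n, ∀ lam : ℝ, 0 < lam → ∀ Y : {i : Fin m // part i = n} → ℝ,
      (∀ i, 0 < Y i) → Gn n (lam • Y) = lam * Gn n Y)
    (An : ∀ n : Fin N,
      Set (({i : Fin m // part i = n} → ℝ) × ({i : Fin m // part i = n} → ℝ)))
    (hAne : ∀ n, (An n).Nonempty)
    (hAcomp : ∀ n, IsCompact (An n))
    (hAb : ∀ n, ∀ ab ∈ An n, ∃ β : ℝ, 0 < β ∧ ∀ i, ab.2 i = β)
    (c : Fin m → ℝ)
    (T : ℕ)
    (lam : Fin T → ℝ) (hlam : ∀ t, 0 ≤ lam t)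
    (d : Fin T → Fin N → ℝ) (r : Fin T → ℝ)
    (Z : (Fin N → ℝ) → Fin N → ℝ)
    (hZ : ∀ p : Fin N → ℝ, (∀ n, 0 < p n) → (∑ n, p n) < 1 →
      ∀ n, ghatP m N part Gn c An n (Z p n) = p n / (1 - ∑ l, p l)) :
    StrictConcaveOn ℝ
      {p : Fin N → ℝ | (∀ n, 0 < p n) ∧ (∑ n, p n) < 1}
      (fun p : Fin N → ℝ =>
        (∑ n, p n * Z p n) -
          ∑ t, lam t * max 0 ((∑ n, d t n * p n) - r t)) := by
  have hsplit : ∀ p ∈ openSimplex (Fin N), ∀ n,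
      p n * Z p n = (1 - ∑ l, p l) * (p n / (1 - ∑ l, p l) * Z p n) := fun p hp n => by
    field_simp [(one_sub_sum_pos hp).ne']
  refine (strictConcaveOn_of_forall_majorant convex_openSimplex fun w hw => ?_).sub_convexOn
    (convexOn_sum_mul_max_zero convex_openSimplex hlam d r)
  choose β K hβ htouch hle using fun n => exists_exp_touching_ghatP (hGsmooth n).continuousOn
    (hGhom n) (hAcomp n) (hAne n) (hAb n) (Z w n)
  refine ⟨_, strictConcaveOn_sum_perspective fun n => strictConcaveOn_mul_expDecayInv (hβ n) (K n),
    fun p hp => Finset.sum_le_sum fun n _ => ?_, Finset.sum_congr rfl fun n _ => ?_⟩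
  · have hx := div_pos (hp.1 n) (one_sub_sum_pos hp)
    rw [hsplit p hp n]
    refine mul_le_mul_of_nonneg_left (mul_le_mul_of_nonneg_left ?_ hx.le) (one_sub_sum_pos hp).le
    exact le_expDecayInv (hβ n) hx ((hZ p hp.1 hp.2 n).symm.trans_le (hle n (Z p n)))
  · have hx := div_pos (hw.1 n) (one_sub_sum_pos hw)
    rw [hsplit w hw n, expDecayInv_eq (hβ n) hx ((hZ w hw.1 hw.2 n).symm.trans (htouch n))]

/-- For penalty parameters `λ ≥ 0`, the penalized reduced objective
`F(p) = Σ_n p_n z(p)_n − Σ_t λ_t max(0, (d^t)ᵀ p − r_t)` is strictly concave on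
the open simplex `P^G`, where `z(p)` is the unique vector with
`ĝ_n(z(p)_n) = p_n/(1 − Σ_l p_l)`. -/
theorem stmt_19
    (m N : ℕ) (hN : 1 ≤ N)
    (part : Fin m → Fin N) (hpart : ∀ n : Fin N, ∃ i, part i = n)
    (Gn : ∀ n : Fin N, ({i : Fin m // part i = n} → ℝ) → ℝ)
    (hGnonneg : ∀ n, ∀ Y : {i : Fin m // part i = n} → ℝ,
      (∀ i, 0 < Y i) → 0 ≤ Gn n Y)
    (hGsmooth : ∀ n, ContDiffOn ℝ 2 (Gn n)
      {Y : {i : Fin m // part i = n} → ℝ | ∀ i, 0 < Y i})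
    (hGhom : ∀ n, ∀ lam : ℝ, 0 < lam → ∀ Y : {i : Fin m // part i = n} → ℝ,
      (∀ i, 0 < Y i) → Gn n (lam • Y) = lam * Gn n Y)
    (hGd1 : ∀ n, ∀ Y : {i : Fin m // part i = n} → ℝ, (∀ i, 0 < Y i) →
      ∀ i, 0 < fderiv ℝ (Gn n) Y (Pi.single i 1))
    (hGd2 : ∀ n, ∀ Y : {i : Fin m // part i = n} → ℝ, (∀ i, 0 < Y i) →
      ∀ i j, i ≠ j →
        fderiv ℝ (fun W => fderiv ℝ (Gn n) W (Pi.single i 1)) Y (Pi.single j 1) ≤ 0)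
    (An : ∀ n : Fin N,
      Set (({i : Fin m // part i = n} → ℝ) × ({i : Fin m // part i = n} → ℝ)))
    (hAne : ∀ n, (An n).Nonempty) (hAconv : ∀ n, Convex ℝ (An n))
    (hAcomp : ∀ n, IsCompact (An n))
    (hAb : ∀ n, ∀ ab ∈ An n, ∃ β : ℝ, 0 < β ∧ ∀ i, ab.2 i = β)
    (c : Fin m → ℝ) (hc : ∀ i, 0 ≤ c i)
    (T : ℕ) (hT : 1 ≤ T)
    (lam : Fin T → ℝ) (hlam : ∀ t, 0 ≤ lam t)
    (d : Fin T → Fin N → ℝ) (r : Fin T → ℝ)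
    (Z : (Fin N → ℝ) → Fin N → ℝ)
    (hZ : ∀ p : Fin N → ℝ, (∀ n, 0 < p n) → (∑ n, p n) < 1 →
      ∀ n, ghatP m N part Gn c An n (Z p n) = p n / (1 - ∑ l, p l)) :
    StrictConcaveOn ℝ
      {p : Fin N → ℝ | (∀ n, 0 < p n) ∧ (∑ n, p n) < 1}
      (fun p : Fin N → ℝ =>
        (∑ n, p n * Z p n) -
          ∑ t, lam t * max 0 ((∑ n, d t n * p n) - r t)) :=
  stmt_19_general m N part Gn hGsmooth hGhom An hAne hAcomp hAb c T lam hlam d r Z hZ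
end ExpDecay
end
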